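/- arXiv:2105.00052 — 7 statements merged into one kernel-verified Lean document; each statement's English description precedes it below -/
import Mathlib

section
/- For all natural numbers a_1, ..., a_k each at most M, and for each natural number S ≥ k(M² − M) which is divisible by gcd(a_1, ..., a_k), there exist nonnegative integers b_1, ..., b_k such that S = a_1·b_1 + ... + a_k·b_k. -/
/-!
Induct on the number of generators. Split off one generator `a`
and let `d` be the gcd of the others.
Bezout gives `t < d` with `t * a ≡ S [MOD d]`; since `d ≤ M`, the term `t * a` is at most
`M² - M`, so `S - t * a` is still large enough and divisible by `d`, and the remaining
generators represent it by induction.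
-/

theorem Nat.exists_lt_mul_modEq_of_gcd_dvd {a d S : ℕ} [NeZero d] (h : Nat.gcd a d ∣ S) :
    ∃ t < d, t * a ≡ S [MOD d] := by
  obtain ⟨s, rfl⟩ := h
  refine ⟨((Nat.gcdA a d * s : ℤ) : ZMod d).val, ZMod.val_lt _, ?_⟩
  rw [← ZMod.natCast_eq_natCast_iff, Nat.cast_mul, ZMod.natCast_zmod_val, Nat.cast_mul,
    ← Int.cast_natCast (Nat.gcd a d), Nat.gcd_eq_gcd_ab]
  push_cast
  rw [ZMod.natCast_self]
  ring

theorem Finset.gcd_le_of_forall_le {ι : Type*} {s : Finset ι} {a : ι → ℕ} {M : ℕ}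
    (ha : ∀ i ∈ s, a i ≤ M) (hs : s.gcd a ≠ 0) : s.gcd a ≤ M := by
  obtain ⟨j, hj, haj⟩ : ∃ j ∈ s, a j ≠ 0 := by
    simpa using mt Finset.gcd_eq_zero_iff.mpr hs
  exact (Nat.le_of_dvd (Nat.pos_of_ne_zero haj) (Finset.gcd_dvd hj)).trans (ha j hj)

theorem Finset.exists_sum_mul_eq_of_gcd_dvd {ι : Type*} [DecidableEq ι] (s : Finset ι)
    (a : ι → ℕ) {M : ℕ} (ha : ∀ i ∈ s, a i ≤ M) {S : ℕ}
    (hS : s.card * (M ^ 2 - M) ≤ S) (hdvd : s.gcd a ∣ S) : ∃ b : ι → ℕ, S = ∑ i ∈ s, a i * b i := by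
  induction s using Finset.induction_on generalizing S with
  | empty =>
    exact ⟨0, by simpa using hdvd⟩
  | insert i s hi ih =>
    rw [Finset.forall_mem_insert] at ha
    rw [Finset.gcd_insert] at hdvd
    rw [Finset.card_insert_of_notMem hi, add_one_mul] at hS
    rcases eq_or_ne (s.gcd a) 0 with hd | hd
    · have hs : ∀ j ∈ s, a j = 0 := Finset.gcd_eq_zero_iff.mp hd
      rw [hd, gcd_zero_right, normalize_eq] at hdvd
      refine ⟨fun _ => S / a i, ?_⟩
      rw [Finset.sum_insert hi, Finset.sum_eq_zero fun j hj => by rw [hs j hj, zero_mul],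
        add_zero, Nat.mul_div_cancel' hdvd]
    · have : NeZero (s.gcd a) := ⟨hd⟩
      obtain ⟨t, htd, ht⟩ := Nat.exists_lt_mul_modEq_of_gcd_dvd (a := a i) hdvd
      have hdM : s.gcd a ≤ M := Finset.gcd_le_of_forall_le ha.2 hd
      have hta : t * a i ≤ M ^ 2 - M :=
        calc t * a i ≤ (M - 1) * M := Nat.mul_le_mul (by omega) ha.1
          _ = M ^ 2 - M := by rw [Nat.sub_one_mul, sq]
      have hS' : s.card * (M ^ 2 - M) ≤ S - t * a i := by omega
      obtain ⟨b, hb⟩ := ih ha.2 hS' ((Nat.modEq_iff_dvd' (by omega)).mp ht)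
      refine ⟨Function.update b i t, ?_⟩
      rw [Finset.sum_insert hi, Function.update_self,
        Finset.sum_congr rfl fun j hj => by
          rw [Function.update_of_ne (ne_of_mem_of_not_mem hj hi)],
        ← hb, mul_comm]
      omega

/-- Any S ≥ k(M²−M) divisible by gcd(a₁,…,a_k) is a nonnegative combination of the aᵢ. -/
theorem stmt_0 (k M : ℕ) (a : Fin k → ℕ) (ha : ∀ i, a i ≤ M)
    (S : ℕ) (hS : k * (M ^ 2 - M) ≤ S)
    (hdvd : (Finset.univ.gcd a) ∣ S) :
    ∃ b : Fin k → ℕ, S = ∑ i, a i * b i :=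
  Finset.exists_sum_mul_eq_of_gcd_dvd Finset.univ a (fun i _ => ha i)
    (by rwa [Finset.card_univ, Fintype.card_fin]) hdvd
end

section
/- Let Lin : ℕ^d → ℕ be a reduced linear function Lin(x) = Σ_i n_i x_i with all n_i > 0 and gcd(n_1,...,n_d) = 1, and let M = max_i n_i. Define zero(Lin) ⊆ ℤ^d to be the set of vectors n_j·e_i − n_i·e_j for i, j ∈ [1,d]. Then for any u, v ∈ ℕ^d with Lin(u) = Lin(v) ≥ d·M³, there exists a finite sequence u = x_0, x_1, ..., x_k = v of vectors in ℕ^d such that x_i − x_{i−1} ∈ zero(Lin) for each i ∈ [1,k]. -/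
/-- A step vector of `zero(Lin)`: `n_j·e_i − n_i·e_j`. -/
def zeroLinVec {d : ℕ} (n : Fin d → ℕ) (w : Fin d → ℤ) : Prop :=
  ∃ i j : Fin d, w = fun l =>
    (n j : ℤ) * (if l = i then 1 else 0) - (n i : ℤ) * (if l = j then 1 else 0)


namespace Stmt2Aux

variable {d : ℕ} (n : Fin d → ℕ)

def vij (i j : Fin d) : Fin d → ℤ := fun l =>
  (n j : ℤ) * (if l = i then 1 else 0) - (n i : ℤ) * (if l = j then 1 else 0)

def Step (a b : Fin d → ℕ) : Prop := zeroLinVec n fun l => (b l : ℤ) - (a l : ℤ)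

def Reach : (Fin d → ℕ) → (Fin d → ℕ) → Prop := Relation.ReflTransGen (Step n)

def val (a : Fin d → ℕ) : ℕ := ∑ l, n l * a l

variable {n}

lemma vij_swap (i j l : Fin d) : vij n j i l = - vij n i j l := by
  simp [vij]

lemma step_symm {a b : Fin d → ℕ} (h : Step n a b) : Step n b a := by
  obtain ⟨i, j, hw⟩ := h
  refine ⟨j, i, funext fun l => ?_⟩
  have := congrFun hw l
  linarith

lemma reach_symm {a b : Fin d → ℕ} (h : Reach n a b) : Reach n b a := by
  induction h with
  | refl => exact Relation.ReflTransGen.refl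
  | tail _ hstep ih => exact Relation.ReflTransGen.head (step_symm hstep) ih

lemma sum_n_vij (i j : Fin d) : ∑ l, (n l : ℤ) * vij n i j l = 0 := by
  simp [vij, mul_sub, Finset.sum_sub_distrib, mul_ite, mul_one, mul_zero,
    Finset.sum_ite_eq', mul_comm]

lemma step_val {a b : Fin d → ℕ} (h : Step n a b) : val n a = val n b := by
  obtain ⟨i, j, hw⟩ := h
  have hz : ∑ l, ((n l : ℤ) * b l - (n l : ℤ) * a l) = 0 := by
    have h0 := sum_n_vij (n := n) i j
    rw [← h0]
    refine Finset.sum_congr rfl fun l _ => ?_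
    have := congrFun hw l
    simp only [vij]
    rw [← this]; ring
  rw [Finset.sum_sub_distrib] at hz
  have : (val n a : ℤ) = (val n b : ℤ) := by
    simp only [val, Nat.cast_sum, Nat.cast_mul]
    linarith
  exact_mod_cast this

lemma step_move (i j : Fin d) (hij : i ≠ j) (a : Fin d → ℕ) (h : n i ≤ a j) :
    Step n a (Function.update (Function.update a i (a i + n j)) j (a j - n i)) := by
  have hcast : ((a j - n i : ℕ) : ℤ) = (a j : ℤ) - (n i : ℤ) := Nat.cast_sub h
  refine ⟨i, j, funext fun l => ?_⟩
  show ((Function.update (Function.update a i (a i + n j)) j (a j - n i) l : ℕ) : ℤ)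
      - (a l : ℤ) = (n j : ℤ) * (if l = i then 1 else 0) - (n i : ℤ) * (if l = j then 1 else 0)
  rcases eq_or_ne l i with rfl | hli
  · rw [Function.update_apply, if_neg hij, Function.update_self]
    simp [hij]
  · rcases eq_or_ne l j with rfl | hlj
    · rw [Function.update_self, hcast]
      simp [hli]
    · rw [Function.update_apply, if_neg hlj, Function.update_apply, if_neg hli]
      simp [hli, hlj]


lemma reach_val {a b : Fin d → ℕ} (h : Reach n a b) : val n a = val n b := by
  induction h with
  | refl => rfl
  | tail _ hstep ih => exact ih.trans (step_val hstep)
section Main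
variable {d : ℕ} {n : Fin d → ℕ} {p : Fin d} {M : ℕ}

lemma pile_big (hp : n p = M) (hMl : ∀ l, n l ≤ M) (hM1 : 1 ≤ M) (hd : 0 < d)
    (a : Fin d → ℕ) (hnorm : ∀ l, l ≠ p → a l < M)
    (hval : d * M ^ 3 ≤ val n a) : M ≤ a p := by
  have hsplit : val n a = n p * a p + ∑ l ∈ Finset.univ.erase p, n l * a l := by
    rw [val, ← Finset.add_sum_erase _ _ (Finset.mem_univ p)]
  have hout : ∑ l ∈ Finset.univ.erase p, n l * a l ≤ (d - 1) * (M * (M - 1)) := by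
    calc ∑ l ∈ Finset.univ.erase p, n l * a l
        ≤ ∑ _l ∈ Finset.univ.erase p, M * (M - 1) := by
          refine Finset.sum_le_sum fun l hl => ?_
          have hlp : l ≠ p := Finset.ne_of_mem_erase hl
          exact Nat.mul_le_mul (hMl l) (by have := hnorm l hlp; omega)
      _ = (d - 1) * (M * (M - 1)) := by
          rw [Finset.sum_const, smul_eq_mul, Finset.card_erase_of_mem (Finset.mem_univ p),
            Finset.card_univ, Fintype.card_fin]
  have hppM : n p * a p ≤ M * a p := Nat.mul_le_mul_right _ (hMl p)
  rw [hsplit] at hval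
  have key : d * M ^ 3 ≤ M * a p + (d - 1) * (M * (M - 1)) := by omega
  rcases Nat.exists_eq_add_of_lt hd with ⟨e, rfl⟩
  obtain ⟨m, rfl⟩ : ∃ m, M = m + 1 := ⟨M - 1, by omega⟩
  by_contra hap
  have hap' : a p ≤ m := by omega
  have hsub : m + 1 - 1 = m := by omega
  have hsub2 : 0 + e + 1 - 1 = e := by omega
  rw [hsub, hsub2] at key
  have c1 : (m + 1) * a p ≤ (m + 1) * m := Nat.mul_le_mul_left _ hap'
  have c2 : (0 + e + 1) * ((m + 1) ^ 3) ≤ (0 + e + 1) * ((m + 1) * m) := by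
    calc (0 + e + 1) * ((m + 1) ^ 3) ≤ (m + 1) * m + e * ((m + 1) * m) := by omega
      _ = (0 + e + 1) * ((m + 1) * m) := by ring
  have c3 : (m + 1) ^ 3 ≤ (m + 1) * m := Nat.le_of_mul_le_mul_left c2 (by omega)
  have c4 : m < (m + 1) * (m + 1) :=
    Nat.lt_of_lt_of_le (Nat.lt_succ_self m) (Nat.le_mul_of_pos_left _ (Nat.succ_pos m))
  have c5 : (m + 1) * m < (m + 1) * ((m + 1) * (m + 1)) :=
    by exact Nat.mul_lt_mul_of_le_of_lt (le_refl (m + 1)) c4 (Nat.succ_pos m)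
  have c6 : (m + 1) ^ 3 = (m + 1) * ((m + 1) * (m + 1)) := by ring
  omega

lemma normC (hpM : n p = M) (q : Fin d) (hq : q ≠ p) (a : Fin d → ℕ) (h2 : a q < 2 * M) :
    ∃ b, Reach n a b ∧ b q < M ∧ ((b q : ZMod M) = (a q : ZMod M)) ∧
      ∀ l, l ≠ q → l ≠ p → b l = a l := by
  by_cases hle : M ≤ a q
  · refine ⟨Function.update (Function.update a p (a p + n q)) q (a q - n p), ?_, ?_, ?_, ?_⟩
    · exact Relation.ReflTransGen.single
        (step_move p q (Ne.symm hq) a (by rw [hpM]; exact hle))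
    · rw [Function.update_self, hpM]; omega
    · rw [Function.update_self, hpM]
      have h3 : ((a q - M : ℕ) : ZMod M) = ((a q : ℕ) : ZMod M) - (M : ZMod M) :=
        Nat.cast_sub hle
      rw [h3, ZMod.natCast_self, sub_zero]
    · intro l hlq hlp
      rw [Function.update_apply, if_neg hlq, Function.update_apply, if_neg hlp]
  · exact ⟨a, Relation.ReflTransGen.refl, lt_of_not_ge hle, rfl, fun _ _ _ => rfl⟩

lemma exec1 (hp : n p = M) (hMl : ∀ l, n l ≤ M) (hM1 : 1 ≤ M) (hd : 0 < d)
    (i j : Fin d) (a : Fin d → ℕ) (hnorm : ∀ l, l ≠ p → a l < M)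
    (hval : d * M ^ 3 ≤ val n a) :
    ∃ b, Reach n a b ∧ (∀ l, l ≠ p → b l < M) ∧
      ∀ l, l ≠ p → (b l : ZMod M) = (a l : ZMod M) + ((vij n i j l : ℤ) : ZMod M) := by
  rcases eq_or_ne i j with rfl | hij
  · refine ⟨a, Relation.ReflTransGen.refl, hnorm, fun l hl => ?_⟩
    simp [vij]
  rcases eq_or_ne j p with rfl | hjp
  · refine ⟨a, Relation.ReflTransGen.refl, hnorm, fun l hl => ?_⟩
    simp only [vij, if_neg hl, mul_zero, sub_zero, hp]
    push_cast
    simp [ZMod.natCast_self]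
  rcases eq_or_ne i p with rfl | hip
  · refine ⟨a, Relation.ReflTransGen.refl, hnorm, fun l hl => ?_⟩
    simp only [vij, if_neg hl, mul_zero, zero_sub, hp]
    push_cast
    simp [ZMod.natCast_self]
  -- real case
  have hpile : M ≤ a p := pile_big hp hMl hM1 hd a hnorm hval
  set a1 := Function.update (Function.update a j (a j + n p)) p (a p - n j) with ha1
  have hs1 : Step n a a1 := step_move j p hjp a (le_trans (hMl j) hpile)
  have ha1j : a1 j = a j + M := by
    rw [ha1, Function.update_apply, if_neg hjp, Function.update_self, hp]
  have ha1i : a1 i = a i := by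
    rw [ha1, Function.update_apply, if_neg hip, Function.update_apply, if_neg hij]
  have ha1o : ∀ l, l ≠ j → l ≠ p → a1 l = a l := fun l h1 h2 => by
    rw [ha1, Function.update_apply, if_neg h2, Function.update_apply, if_neg h1]
  set a2 := Function.update (Function.update a1 i (a1 i + n j)) j (a1 j - n i) with ha2
  have hs2 : Step n a1 a2 := step_move i j hij a1 (by rw [ha1j]; have := hMl i; omega)
  have ha2i : a2 i = a i + n j := by
    rw [ha2, Function.update_apply, if_neg hij, Function.update_self, ha1i]
  have ha2j : a2 j = a j + M - n i := by rw [ha2, Function.update_self, ha1j]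
  have ha2o : ∀ l, l ≠ i → l ≠ j → l ≠ p → a2 l = a l := fun l h1 h2 h3 => by
    rw [ha2, Function.update_apply, if_neg h2, Function.update_apply, if_neg h1, ha1o l h2 h3]
  obtain ⟨a3, hr3, h3lt, h3res, h3o⟩ := normC hp i hip a2 (by
    rw [ha2i]; have := hnorm i hip; have := hMl j; omega)
  have ha3j : a3 j = a2 j := h3o j (Ne.symm hij) hjp
  obtain ⟨b, hr4, h4lt, h4res, h4o⟩ := normC hp j hjp a3 (by
    rw [ha3j, ha2j]; have := hnorm j hjp; have := hMl i; omega)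
  refine ⟨b, ?_, ?_, ?_⟩
  · exact ((Relation.ReflTransGen.single hs1).tail hs2).trans (hr3.trans hr4)
  · intro l hl
    rcases eq_or_ne l j with rfl | hlj
    · exact h4lt
    rcases eq_or_ne l i with rfl | hli
    · rw [h4o l hlj hl]; exact h3lt
    · rw [h4o l hlj hl, h3o l hli hl, ha2o l hli hlj hl]; exact hnorm l hl
  · intro l hl
    rcases eq_or_ne l j with rfl | hlj
    · rw [h4res, ha3j, ha2j]
      simp only [vij, if_neg (Ne.symm hij), if_pos rfl, mul_zero, mul_one, zero_sub]
      have hle : n i ≤ a l + M := le_trans (hMl i) (Nat.le_add_left M (a l))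
      rw [show ((a l + M - n i : ℕ) : ZMod M) = ((a l + M : ℕ) : ZMod M) - (n i : ZMod M) from
        Nat.cast_sub hle]
      push_cast
      simp only [ZMod.natCast_self, add_zero]
      ring
    rcases eq_or_ne l i with rfl | hli
    · rw [h4o l hlj hl, h3res, ha2i]
      simp only [vij, if_pos rfl, if_neg hlj, mul_one, mul_zero, sub_zero]
      push_cast
      ring
    · rw [h4o l hlj hl, h3o l hli hl, ha2o l hli hlj hl]
      simp [vij, if_neg hli, if_neg hlj]

end Main
section Main2
variable {d : ℕ} {n : Fin d → ℕ} {p : Fin d} {M : ℕ}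

lemma phaseA (hp : n p = M) (hM1 : 1 ≤ M) :
    ∀ N (a : Fin d → ℕ), (∑ l ∈ Finset.univ.erase p, a l) ≤ N →
      ∃ b, Reach n a b ∧ ∀ l, l ≠ p → b l < M := by
  intro N
  induction N with
  | zero =>
    intro a hN
    refine ⟨a, Relation.ReflTransGen.refl, fun l hl => ?_⟩
    have : a l ≤ ∑ l ∈ Finset.univ.erase p, a l :=
      Finset.single_le_sum (fun _ _ => Nat.zero_le _) (Finset.mem_erase.2 ⟨hl, Finset.mem_univ l⟩)
    omega
  | succ N ih =>
    intro a hN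
    by_cases hex : ∃ j, j ≠ p ∧ M ≤ a j
    · obtain ⟨j, hjp, hle⟩ := hex
      have hj : j ∈ Finset.univ.erase p := Finset.mem_erase.2 ⟨hjp, Finset.mem_univ j⟩
      set a' := Function.update (Function.update a p (a p + n j)) j (a j - n p) with ha'
      have hs : Step n a a' := step_move p j (Ne.symm hjp) a (by rw [hp]; exact hle)
      have hsum' : ∑ l ∈ Finset.univ.erase p, a' l ≤ N := by
        have e1 : ∑ l ∈ Finset.univ.erase p, a' l
            = (a j - n p) + ∑ l ∈ (Finset.univ.erase p).erase j,
                Function.update a p (a p + n j) l := by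
          rw [ha', Finset.sum_update_of_mem hj, ← Finset.erase_eq]
        have e2 : ∑ l ∈ (Finset.univ.erase p).erase j, Function.update a p (a p + n j) l
            = ∑ l ∈ (Finset.univ.erase p).erase j, a l := by
          refine Finset.sum_congr rfl fun l hl => ?_
          have : l ≠ p := Finset.ne_of_mem_erase (Finset.mem_of_mem_erase hl)
          rw [Function.update_apply, if_neg this]
        have e3 : a j + ∑ l ∈ (Finset.univ.erase p).erase j, a l
            = ∑ l ∈ Finset.univ.erase p, a l := Finset.add_sum_erase _ _ hj
        rw [e1, e2, hp]
        omega
      obtain ⟨b, hrb, hnb⟩ := ih a' hsum'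
      exact ⟨b, Relation.ReflTransGen.head hs hrb, hnb⟩
    · push_neg at hex
      exact ⟨a, Relation.ReflTransGen.refl, fun l hl => hex l hl⟩

lemma execNat (hp : n p = M) (hMl : ∀ l, n l ≤ M) (hM1 : 1 ≤ M) (hd : 0 < d)
    (i j : Fin d) (t : ℕ) :
    ∀ a : Fin d → ℕ, (∀ l, l ≠ p → a l < M) → d * M ^ 3 ≤ val n a →
    ∃ b, Reach n a b ∧ (∀ l, l ≠ p → b l < M) ∧
      ∀ l, l ≠ p → (b l : ZMod M) = (a l : ZMod M) + (((t : ℤ) * vij n i j l : ℤ) : ZMod M) := by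
  induction t with
  | zero =>
    intro a hnorm _
    refine ⟨a, Relation.ReflTransGen.refl, hnorm, fun l hl => ?_⟩
    push_cast
    ring
  | succ t ih =>
    intro a hnorm hval
    obtain ⟨b1, hr1, hn1, hres1⟩ := exec1 hp hMl hM1 hd i j a hnorm hval
    obtain ⟨b, hr, hn, hres⟩ := ih b1 hn1 (by rwa [← reach_val hr1])
    refine ⟨b, hr1.trans hr, hn, fun l hl => ?_⟩
    rw [hres l hl, hres1 l hl]
    push_cast
    ring

lemma execZ (hp : n p = M) (hMl : ∀ l, n l ≤ M) (hM1 : 1 ≤ M) (hd : 0 < d)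
    (i j : Fin d) (m : ℤ) (a : Fin d → ℕ) (hnorm : ∀ l, l ≠ p → a l < M)
    (hval : d * M ^ 3 ≤ val n a) :
    ∃ b, Reach n a b ∧ (∀ l, l ≠ p → b l < M) ∧
      ∀ l, l ≠ p → (b l : ZMod M) = (a l : ZMod M) + ((m * vij n i j l : ℤ) : ZMod M) := by
  obtain ⟨t, rfl | rfl⟩ := Int.eq_nat_or_neg m
  · exact execNat hp hMl hM1 hd i j t a hnorm hval
  · obtain ⟨b, hr, hn, hres⟩ := execNat hp hMl hM1 hd j i t a hnorm hval
    refine ⟨b, hr, hn, fun l hl => ?_⟩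
    rw [hres l hl]
    congr 1
    rw [show (t : ℤ) * vij n j i l = -(t : ℤ) * vij n i j l by rw [vij_swap]; ring]

lemma fold (hp : n p = M) (hMl : ∀ l, n l ≤ M) (hM1 : 1 ≤ M) (hd : 0 < d)
    (m : Fin d × Fin d → ℤ) (S : Finset (Fin d × Fin d)) :
    ∀ a : Fin d → ℕ, (∀ l, l ≠ p → a l < M) → d * M ^ 3 ≤ val n a →
    ∃ b, Reach n a b ∧ (∀ l, l ≠ p → b l < M) ∧
      ∀ l, l ≠ p → (b l : ZMod M)
        = (a l : ZMod M) + ((∑ q ∈ S, m q * vij n q.1 q.2 l : ℤ) : ZMod M) := by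
  induction S using Finset.induction_on with
  | empty =>
    intro a hnorm _
    refine ⟨a, Relation.ReflTransGen.refl, hnorm, fun l hl => ?_⟩
    simp
  | @insert q S hq ih =>
    intro a hnorm hval
    obtain ⟨b1, hr1, hn1, hres1⟩ := execZ hp hMl hM1 hd q.1 q.2 (m q) a hnorm hval
    obtain ⟨b, hr, hn, hres⟩ := ih b1 hn1 (by rwa [← reach_val hr1])
    refine ⟨b, hr1.trans hr, hn, fun l hl => ?_⟩
    rw [hres l hl, hres1 l hl, Finset.sum_insert hq]
    push_cast
    ring

lemma bezout {ι : Type*} [DecidableEq ι] (S : Finset ι) (f : ι → ℕ) :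
    ∃ c : ι → ℤ, ∑ i ∈ S, c i * (f i : ℤ) = ((S.gcd f : ℕ) : ℤ) := by
  induction S using Finset.induction_on with
  | empty => exact ⟨0, by simp⟩
  | @insert a S ha ih =>
    obtain ⟨c, hc⟩ := ih
    refine ⟨Function.update (fun i => Nat.gcdB (f a) (S.gcd f) * c i) a
      (Nat.gcdA (f a) (S.gcd f)), ?_⟩
    rw [Finset.sum_insert ha, Finset.gcd_insert]
    have hrest : ∑ i ∈ S, (Function.update (fun i => Nat.gcdB (f a) (S.gcd f) * c i) a
        (Nat.gcdA (f a) (S.gcd f))) i * (f i : ℤ)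
        = Nat.gcdB (f a) (S.gcd f) * ∑ i ∈ S, c i * (f i : ℤ) := by
      rw [Finset.mul_sum]
      refine Finset.sum_congr rfl fun i hi => ?_
      rw [Function.update_of_ne (ne_of_mem_of_not_mem hi ha)]
      ring
    rw [Function.update_self, hrest, hc]
    have hb := Nat.gcd_eq_gcd_ab (f a) (S.gcd f)
    rw [show (GCDMonoid.gcd (f a) (S.gcd f) : ℕ) = Nat.gcd (f a) (S.gcd f) from rfl]
    rw [hb]
    push_cast
    ring

lemma key_alg (c z : Fin d → ℤ) (hc : ∑ k, c k * (n k : ℤ) = 1)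
    (hz : ∑ i, (n i : ℤ) * z i = 0) (l : Fin d) :
    ∑ q ∈ Finset.univ ×ˢ Finset.univ, (z q.1 * c q.2) * vij n q.1 q.2 l = z l := by
  rw [Finset.sum_product]
  have h1 : ∀ i : Fin d, ∑ k, (z i * c k) * vij n i k l
      = (if l = i then z i else 0) - c l * ((n i : ℤ) * z i) := by
    intro i
    have e1 : ∑ k, (z i * c k) * vij n i k l
        = (if l = i then z i else 0) * (∑ k, c k * (n k : ℤ))
          - ((n i : ℤ) * z i) * ∑ k, (if l = k then c k else 0) := by
      rw [Finset.mul_sum, Finset.mul_sum, ← Finset.sum_sub_distrib]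
      refine Finset.sum_congr rfl fun k _ => ?_
      simp only [vij]
      split_ifs <;> ring
    rw [e1, hc, Finset.sum_ite_eq Finset.univ l c]
    simp only [Finset.mem_univ, if_true, mul_one]
    ring
  rw [Finset.sum_congr rfl fun i _ => h1 i, Finset.sum_sub_distrib,
    Finset.sum_ite_eq Finset.univ l z, ← Finset.mul_sum, hz]
  simp

lemma natcast_zmod_inj (hM1 : 1 ≤ M) {x y : ℕ} (hx : x < M) (hy : y < M)
    (h : (x : ZMod M) = y) : x = y := by
  haveI : NeZero M := ⟨by omega⟩
  have := congrArg ZMod.val h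
  rwa [ZMod.val_cast_of_lt hx, ZMod.val_cast_of_lt hy] at this

lemma main_reach (hpos : ∀ i, 0 < n i) (hred : Finset.univ.gcd n = 1) (hd : 0 < d)
    (hp : n p = M) (hMl : ∀ l, n l ≤ M) (u v : Fin d → ℕ)
    (heq : val n u = val n v) (hbig : d * M ^ 3 ≤ val n u) : Reach n u v := by
  have hM1 : 1 ≤ M := by rw [← hp]; exact hpos p
  obtain ⟨U, hrU, hnU⟩ := phaseA hp hM1 (∑ l ∈ Finset.univ.erase p, u l) u le_rfl
  obtain ⟨V, hrV, hnV⟩ := phaseA hp hM1 (∑ l ∈ Finset.univ.erase p, v l) v le_rfl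
  have hvalU : val n U = val n u := (reach_val hrU).symm
  have hvalV : val n V = val n v := (reach_val hrV).symm
  obtain ⟨c, hc⟩ := bezout Finset.univ n
  rw [hred] at hc
  push_cast at hc
  set z : Fin d → ℤ := fun l => (V l : ℤ) - (U l : ℤ) with hzdef
  have hUV : (val n U : ℤ) = (val n V : ℤ) := by rw [hvalU, hvalV, heq]
  have hz : ∑ i, (n i : ℤ) * z i = 0 := by
    simp only [val, Nat.cast_sum, Nat.cast_mul] at hUV
    simp only [hzdef, mul_sub, Finset.sum_sub_distrib]
    linarith
  obtain ⟨B, hrB, hnB, hresB⟩ := fold hp hMl hM1 hd (fun q => z q.1 * c q.2)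
    (Finset.univ ×ˢ Finset.univ) U hnU (by rw [hvalU]; exact hbig)
  have hoff : ∀ l, l ≠ p → B l = V l := by
    intro l hl
    refine natcast_zmod_inj hM1 (hnB l hl) (hnV l hl) ?_
    rw [hresB l hl, key_alg c z hc hz l]
    simp only [hzdef]
    push_cast
    ring
  have hBV : B = V := by
    funext l
    rcases eq_or_ne l p with rfl | hlp
    · have hvB : val n B = val n V := by
        rw [← reach_val hrB, hvalU, hvalV, heq]
      have hsB : val n B = n l * B l + ∑ q ∈ Finset.univ.erase l, n q * B q := by
        rw [val, ← Finset.add_sum_erase _ _ (Finset.mem_univ l)]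
      have hsV : val n V = n l * V l + ∑ q ∈ Finset.univ.erase l, n q * V q := by
        rw [val, ← Finset.add_sum_erase _ _ (Finset.mem_univ l)]
      have hsame : ∑ q ∈ Finset.univ.erase l, n q * B q
          = ∑ q ∈ Finset.univ.erase l, n q * V q := by
        refine Finset.sum_congr rfl fun q hq => ?_
        rw [hoff q (Finset.ne_of_mem_erase hq)]
      have : n l * B l = n l * V l := by omega
      exact Nat.eq_of_mul_eq_mul_left (hpos l) this
    · exact hoff l hlp
  rw [hBV] at hrB
  exact (hrU.trans hrB).trans (reach_symm hrV)

end Main2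
lemma reach_to_seq {d : ℕ} {n : Fin d → ℕ} {u v : Fin d → ℕ} (h : Reach n u v) :
    ∃ (k : ℕ) (x : Fin (k + 1) → (Fin d → ℕ)),
      x 0 = u ∧ x (Fin.last k) = v ∧
      ∀ i : Fin k, zeroLinVec n (fun l => (x i.succ l : ℤ) - (x i.castSucc l : ℤ)) := by
  induction h with
  | refl => exact ⟨0, fun _ => u, rfl, rfl, fun i => i.elim0⟩
  | @tail b c hb hstep ih =>
    obtain ⟨k, x, hx0, hxl, hxs⟩ := ih
    refine ⟨k + 1, Fin.snoc x c, ?_, ?_, ?_⟩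
    · rw [← Fin.castSucc_zero, Fin.snoc_castSucc]
      exact hx0
    · rw [Fin.snoc_last]
    · intro i
      refine Fin.lastCases ?_ ?_ i
      · show zeroLinVec n fun l =>
          (((Fin.snoc x c : Fin (k+1+1) → (Fin d → ℕ)) ((Fin.last k).succ) l : ℕ) : ℤ)
            - (((Fin.snoc x c : Fin (k+1+1) → (Fin d → ℕ)) ((Fin.last k).castSucc) l : ℕ) : ℤ)
        rw [Fin.succ_last, Fin.snoc_last, Fin.snoc_castSucc, hxl]
        exact hstep
      · intro i
        show zeroLinVec n fun l =>
          (((Fin.snoc x c : Fin (k+1+1) → (Fin d → ℕ)) ((i.castSucc).succ) l : ℕ) : ℤ)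
            - (((Fin.snoc x c : Fin (k+1+1) → (Fin d → ℕ)) ((i.castSucc).castSucc) l : ℕ) : ℤ)
        rw [Fin.succ_castSucc, Fin.snoc_castSucc, Fin.snoc_castSucc]
        exact hxs i

end Stmt2Aux

/-- Level sets of a reduced positive linear function at sufficiently large values are
connected by single steps from `zero(Lin)` staying within ℕ^d. -/
theorem stmt_2 (d : ℕ) (n : Fin d → ℕ) (hpos : ∀ i, 0 < n i)
    (hred : Finset.univ.gcd n = 1) (M : ℕ) (hM : M = Finset.univ.sup n)
    (u v : Fin d → ℕ)
    (heq : ∑ i, n i * u i = ∑ i, n i * v i)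
    (hbig : d * M ^ 3 ≤ ∑ i, n i * u i) :
    ∃ (k : ℕ) (x : Fin (k + 1) → (Fin d → ℕ)),
      x 0 = u ∧ x (Fin.last k) = v ∧
      ∀ i : Fin k, zeroLinVec n (fun l => (x i.succ l : ℤ) - (x i.castSucc l : ℤ)) := by
  rcases Nat.eq_zero_or_pos d with hd | hd
  · have huv : u = v := funext fun l => absurd l.isLt (by omega)
    exact ⟨0, fun _ => u, rfl, huv, fun i => i.elim0⟩
  · haveI : Nonempty (Fin d) := ⟨⟨0, hd⟩⟩
    obtain ⟨p, -, hpM⟩ := Finset.exists_mem_eq_sup Finset.univ Finset.univ_nonempty n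
    have hp : n p = M := by rw [hM, hpM]
    have hMl : ∀ l, n l ≤ M := fun l => hM ▸ Finset.le_sup (Finset.mem_univ l)
    exact Stmt2Aux.reach_to_seq
      (Stmt2Aux.main_reach hpos hred hd hp hMl u v heq hbig)
end

section
/- Let ρ, ρ_1, ρ_2 be runs of a d-VASS V with the same source, ρ ⊴ ρ_1 and ρ ⊴ ρ_2, and suppose trg(ρ_1) = trg(ρ) + δ_1 and trg(ρ_2) = trg(ρ) + δ_2 for vectors δ_1, δ_2 ∈ ℕ^d. Then there exists a run ρ' of V with the same source such that ρ ⊴ ρ' and trg(ρ') = trg(ρ) + δ_1 + δ_2. -/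
/-- A configuration of a `d`-VASS with states `Q`. -/
abbrev Conf (Q : Type) (d : ℕ) := Q × (Fin d → ℕ)

/-- A transition of a `d`-VASS with states `Q`. -/
abbrev VTrans (Q : Type) (d : ℕ) := Q × (Fin d → ℤ) × Q

/-- An anchored transition: a transition together with its source and target configurations. -/
abbrev AncTrans (Q : Type) (d : ℕ) := Conf Q d × VTrans Q d × Conf Q d

/-- Validity of an anchored transition with respect to the transition set `T`. -/
def ValidAnc {Q : Type} {d : ℕ} (T : Set (VTrans Q d)) (m : AncTrans Q d) : Prop :=
  m.2.1 ∈ T ∧ m.1.1 = m.2.1.1 ∧ m.2.2.1 = m.2.1.2.2 ∧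
  ∀ i, (m.2.2.2 i : ℤ) = (m.1.2 i : ℤ) + m.2.1.2.1 i

/-- A run: a nonempty sequence of consecutive valid anchored transitions. -/
structure Run (Q : Type) (d : ℕ) (T : Set (VTrans Q d)) where
  len : ℕ
  pos : 0 < len
  m : Fin len → AncTrans Q d
  valid : ∀ i, ValidAnc T (m i)
  chain : ∀ (i : Fin len) (h : i.1 + 1 < len), (m i).2.2 = (m ⟨i.1 + 1, h⟩).1

/-- The source configuration of a run. -/
def Run.src {Q : Type} {d : ℕ} {T : Set (VTrans Q d)} (ρ : Run Q d T) : Conf Q d :=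
  (ρ.m ⟨0, ρ.pos⟩).1

/-- The target configuration of a run. -/
def Run.trg {Q : Type} {d : ℕ} {T : Set (VTrans Q d)} (ρ : Run Q d T) : Conf Q d :=
  (ρ.m ⟨ρ.len - 1, by have := ρ.pos; omega⟩).2.2

/-- Componentwise order on configurations (equal states). -/
def ConfLe {Q : Type} {d : ℕ} (c c' : Conf Q d) : Prop := c.1 = c'.1 ∧ c.2 ≤ c'.2

/-- Domination order on anchored transitions: equal transitions, dominated configurations. -/
def AncLe {Q : Type} {d : ℕ} (m m' : AncTrans Q d) : Prop :=
  m.2.1 = m'.2.1 ∧ ConfLe m.1 m'.1 ∧ ConfLe m.2.2 m'.2.2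

/-- The embedding order `⊴` on runs: the anchored transitions of `ρ` embed into those
of `ρ'`, with the last anchored transition of `ρ` matched to the last one of `ρ'`. -/
def RunEmbed {Q : Type} {d : ℕ} {T : Set (VTrans Q d)} (ρ ρ' : Run Q d T) : Prop :=
  ∃ f : Fin ρ.len → Fin ρ'.len, StrictMono f ∧
    (f ⟨ρ.len - 1, by have := ρ.pos; omega⟩).1 = ρ'.len - 1 ∧
    ∀ j, AncLe (ρ.m j) (ρ'.m (f j))

/-- The variant `⊴'` of the embedding order matching the first anchored transitions. -/
def RunEmbed' {Q : Type} {d : ℕ} {T : Set (VTrans Q d)} (ρ ρ' : Run Q d T) : Prop :=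
  ∃ f : Fin ρ.len → Fin ρ'.len, StrictMono f ∧
    (f ⟨0, ρ.pos⟩).1 = 0 ∧
    ∀ j, AncLe (ρ.m j) (ρ'.m (f j))

/-- One step of a VASS with transition set `T`. -/
def Step {Q : Type} {d : ℕ} (T : Set (VTrans Q d)) (c c' : Conf Q d) : Prop :=
  ∃ t ∈ T, c.1 = t.1 ∧ c'.1 = t.2.2 ∧ ∀ i, (c'.2 i : ℤ) = (c.2 i : ℤ) + t.2.1 i

/-- Reachability in a VASS with transition set `T`. -/
def Reach {Q : Type} {d : ℕ} (T : Set (VTrans Q d)) : Conf Q d → Conf Q d → Prop :=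
  Relation.ReflTransGen (Step T)

/-- Adding a nonnegative vector to a configuration. -/
def confAdd {Q : Type} {d : ℕ} (c : Conf Q d) (δ : Fin d → ℕ) : Conf Q d :=
  (c.1, c.2 + δ)

/-!
An anchored transition dominating a valid one with the same label is its translate by a vector
`ν`, so at every matched position `ρ₁` and `ρ₂` run parallel to `ρ` with offsets `ν₁` and `ν₂`,
after inserted blocks `B₁` and `B₂`. Interleaving, before each transition `t` of `ρ`, the block
`B₁` translated by the current offset of `ρ₂`, then `B₂` translated by `ν₁`, then `t` translated by
`ν₁ + ν₂`, gives a run dominating `ρ` whose offsets add up. The induction runs along `ρ` from its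
source, for paths with arbitrary initial offsets.
-/

theorem Fin.forall_exists_le_iff_val_last {n n' : ℕ} (hn : 0 < n) {f : Fin n → Fin n'}
    (hf : Monotone f) : (∀ i, ∃ j, i ≤ f j) ↔ (f ⟨n - 1, by omega⟩ : ℕ) = n' - 1 := by
  have hlt := (f ⟨n - 1, by omega⟩).2
  constructor
  · intro hcof
    obtain ⟨j, hj⟩ := hcof ⟨n' - 1, by omega⟩
    have : n' - 1 ≤ (f ⟨n - 1, by omega⟩ : ℕ) :=
      hj.trans (hf (Fin.le_def.2 (Nat.le_sub_one_of_lt j.2)))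
    omega
  · intro hlast i
    exact ⟨⟨n - 1, by omega⟩, Fin.le_def.2 (by have := i.2; omega)⟩

/-- The list form of `⊴`: each element of `l` is matched by an `R`-larger element of `l'` that
follows a block of unmatched ones, and nothing follows the last match. -/
inductive EndEmbedding {α β : Type*} (R : α → β → Prop) : List α → List β → Prop
  | nil : EndEmbedding R [] []
  | cons {a : α} {b : β} {l : List α} {l' : List β} (B : List β) :
      R a b → EndEmbedding R l l' → EndEmbedding R (a :: l) (B ++ b :: l')

namespace EndEmbedding

variable {α β : Type*} {R : α → β → Prop}

theorem nil_left_iff {l' : List β} : EndEmbedding R [] l' ↔ l' = [] :=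
  ⟨fun h => by cases h; rfl, fun h => h ▸ nil⟩

theorem ne_nil {l : List α} {l' : List β} (h : EndEmbedding R l l') (hl : l ≠ []) : l' ≠ [] := by
  cases h with
  | nil => exact absurd rfl hl
  | cons B _ _ => simp

theorem exists_strictMono {l : List α} {l' : List β} (h : EndEmbedding R l l') :
    ∃ f : Fin l.length → Fin l'.length, StrictMono f ∧ (∀ i, ∃ j, i ≤ f j) ∧
      ∀ j, R l[j] l'[f j] := by
  induction h with
  | nil => exact ⟨Fin.elim0, fun i => i.elim0, fun i => i.elim0, fun i => i.elim0⟩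
  | @cons a b τ τ' B hab hτ ih =>
    obtain ⟨g, hg, hgcof, hgR⟩ := ih
    refine ⟨Fin.cases ⟨B.length, by simp⟩ fun j => ⟨B.length + 1 + g j, by
      simp only [List.length_append, List.length_cons]; omega⟩,
      ?_, ?_, ?_⟩
    · intro i j hij
      cases j using Fin.cases with
      | zero => exact absurd hij (Fin.not_lt_zero i)
      | succ j =>
        cases i using Fin.cases with
        | zero => simp only [Fin.lt_def, Fin.cases_zero, Fin.cases_succ]; omega
        | succ i =>
          have := hg (Fin.succ_lt_succ_iff.1 hij)
          simp only [Fin.lt_def, Fin.cases_succ] at this ⊢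
          omega
    · intro i
      by_cases hi : (i : ℕ) ≤ B.length
      · exact ⟨0, by simpa [Fin.le_def] using hi⟩
      · obtain ⟨j, hj⟩ := hgcof ⟨i - B.length - 1, by
          have := i.2; simp only [List.length_append, List.length_cons] at this; omega⟩
        exact ⟨j.succ, by simp only [Fin.le_def, Fin.cases_succ] at hj ⊢; omega⟩
    · intro j
      cases j using Fin.cases with
      | zero => simpa using hab
      | succ j =>
        simp only [Fin.getElem_fin, Fin.cases_succ, Fin.val_succ, List.getElem_cons_succ]
        rw [List.getElem_append_right (by omega)]
        simpa [show B.length + 1 + (g j : ℕ) - B.length = g j + 1 by omega] using hgR j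

theorem of_strictMono {l : List α} {l' : List β} (f : Fin l.length → Fin l'.length)
    (hf : StrictMono f) (hcof : ∀ i, ∃ j, i ≤ f j) (hR : ∀ j, R l[j] l'[f j]) :
    EndEmbedding R l l' := by
  induction l generalizing l' with
  | nil =>
    rw [nil_left_iff, ← List.length_eq_zero_iff]
    by_contra h
    obtain ⟨j, -⟩ := hcof ⟨0, by omega⟩
    exact j.elim0
  | cons a τ ih =>
    set k : ℕ := (f 0).val
    have hsplit : l' = l'.take k ++ l'[k] :: l'.drop (k + 1) := by
      rw [← List.drop_eq_getElem_cons, List.take_append_drop]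
    have hk : ∀ j : Fin τ.length, k < f j.succ := fun j => hf (Fin.succ_pos j)
    rw [hsplit]
    refine cons _ (hR 0) (ih (fun j => ⟨f j.succ - (k + 1), ?_⟩) ?_ ?_ ?_)
    · have := (f j.succ).2
      have := hk j
      simp only [List.length_drop]
      omega
    · intro i j hij
      have := hf (Fin.succ_lt_succ_iff.2 hij)
      have := hk i
      simp only [Fin.lt_def] at this ⊢
      omega
    · intro i
      obtain ⟨j, hj⟩ := hcof ⟨k + 1 + i, by
        have := i.2; simp only [List.length_drop] at this; omega⟩
      cases j using Fin.cases with
      | zero => simp only [Fin.le_def] at hj; omega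
      | succ j => exact ⟨j, by simp only [Fin.le_def] at hj ⊢; omega⟩
    · intro j
      simpa [List.getElem_drop, Nat.add_sub_of_le (hk j)] using hR j.succ

end EndEmbedding

theorem endEmbedding_ofFn_iff {α β : Type*} {R : α → β → Prop} {n n' : ℕ} (m : Fin n → α)
    (m' : Fin n' → β) :
    EndEmbedding R (List.ofFn m) (List.ofFn m') ↔
      ∃ f : Fin n → Fin n', StrictMono f ∧ (∀ i, ∃ j, i ≤ f j) ∧ ∀ j, R (m j) (m' (f j)) := by
  set e := Fin.castOrderIso (List.length_ofFn (f := m))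
  set e' := Fin.castOrderIso (List.length_ofFn (f := m'))
  constructor
  · intro h
    obtain ⟨F, hF, hcof, hR⟩ := h.exists_strictMono
    refine ⟨e' ∘ F ∘ e.symm, e'.strictMono.comp (hF.comp e.symm.strictMono), fun i => ?_,
      fun j => ?_⟩
    · obtain ⟨j, hj⟩ := hcof (e'.symm i)
      exact ⟨e j, by simpa [e, e', Fin.le_def] using hj⟩
    · have := hR (e.symm j)
      simp only [e, e', Fin.getElem_fin, List.getElem_ofFn] at this ⊢
      exact this
  · rintro ⟨f, hf, hcof, hR⟩
    refine EndEmbedding.of_strictMono (e'.symm ∘ f ∘ e)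
      (e'.symm.strictMono.comp (hf.comp e.strictMono)) (fun i => ?_) (fun j => ?_)
    · obtain ⟨j, hj⟩ := hcof (e' i)
      exact ⟨e.symm j, by simpa [e, e', Fin.le_def] using hj⟩
    · have := hR (e j)
      simp only [e, e', Fin.getElem_fin, List.getElem_ofFn] at this ⊢
      exact this

section VASS

variable {Q : Type} {d : ℕ} {T : Set (VTrans Q d)}

theorem confAdd_confAdd (c : Conf Q d) (μ ν : Fin d → ℕ) :
    confAdd (confAdd c μ) ν = confAdd c (μ + ν) := by
  simp [confAdd, add_assoc]

theorem confAdd_zero (c : Conf Q d) : confAdd c 0 = c :=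
  rfl

theorem confAdd_right_injective (c : Conf Q d) : Function.Injective (confAdd c) :=
  fun _ _ h => add_left_cancel (congrArg Prod.snd h)

def ancShift (ν : Fin d → ℕ) (a : AncTrans Q d) : AncTrans Q d :=
  (confAdd a.1 ν, a.2.1, confAdd a.2.2 ν)

theorem ValidAnc.shift {a : AncTrans Q d} (h : ValidAnc T a) (ν : Fin d → ℕ) :
    ValidAnc T (ancShift ν a) := by
  obtain ⟨hT, hsrc, htrg, hv⟩ := h
  refine ⟨hT, hsrc, htrg, fun i => ?_⟩
  simp only [ancShift, confAdd, Pi.add_apply, Nat.cast_add, hv i]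
  ring

theorem ancLe_ancShift (a : AncTrans Q d) (ν : Fin d → ℕ) : AncLe a (ancShift ν a) :=
  ⟨rfl, ⟨rfl, le_self_add⟩, ⟨rfl, le_self_add⟩⟩

theorem ValidAnc.exists_eq_ancShift {a b : AncTrans Q d} (ha : ValidAnc T a) (hb : ValidAnc T b)
    (hab : AncLe a b) : ∃ ν, b = ancShift ν a := by
  obtain ⟨hlab, ⟨hsrcq, hsrcv⟩, ⟨htrgq, -⟩⟩ := hab
  refine ⟨b.1.2 - a.1.2, Prod.ext (Prod.ext hsrcq.symm ?_) (Prod.ext hlab.symm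
    (Prod.ext htrgq.symm (funext fun i => ?_)))⟩
  · exact (add_tsub_cancel_of_le hsrcv).symm
  · have hai := ha.2.2.2 i
    have hbi := hb.2.2.2 i
    have : a.1.2 i ≤ b.1.2 i := hsrcv i
    simp only [ancShift, confAdd, Pi.add_apply, Pi.sub_apply, hlab] at hai hbi ⊢
    omega

inductive IsPath (T : Set (VTrans Q d)) : Conf Q d → List (AncTrans Q d) → Conf Q d → Prop
  | nil (c : Conf Q d) : IsPath T c [] c
  | cons {a : AncTrans Q d} {l : List (AncTrans Q d)} {e : Conf Q d} :
      ValidAnc T a → IsPath T a.2.2 l e → IsPath T a.1 (a :: l) e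

namespace IsPath

variable {c e : Conf Q d} {a : AncTrans Q d} {l l' : List (AncTrans Q d)}

theorem nil_iff : IsPath T c [] e ↔ c = e :=
  ⟨fun h => by cases h; rfl, fun h => h ▸ nil c⟩

theorem cons_iff : IsPath T c (a :: l) e ↔ a.1 = c ∧ ValidAnc T a ∧ IsPath T a.2.2 l e :=
  ⟨fun h => by cases h with | cons ha hl => exact ⟨rfl, ha, hl⟩,
    fun ⟨hc, ha, hl⟩ => hc ▸ cons ha hl⟩

theorem append_iff : IsPath T c (l ++ l') e ↔ ∃ m, IsPath T c l m ∧ IsPath T m l' e := by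
  induction l generalizing c with
  | nil => simp [nil_iff]
  | cons a l ih => simp only [List.cons_append, cons_iff, ih, exists_and_left, and_assoc]

theorem map_ancShift (h : IsPath T c l e) (ν : Fin d → ℕ) :
    IsPath T (confAdd c ν) (l.map (ancShift ν)) (confAdd e ν) := by
  induction h with
  | nil c => exact nil _
  | cons ha _ ih => exact cons (ha.shift ν) ih

theorem mem_validAnc (h : IsPath T c l e) : ∀ a ∈ l, ValidAnc T a := by
  induction h with
  | nil => simp
  | cons ha _ ih => exact List.forall_mem_cons.2 ⟨ha, ih⟩

theorem getElem_zero_fst (h : IsPath T c l e) (hl : 0 < l.length) : l[0].1 = c := by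
  cases h with
  | nil => simp at hl
  | cons => rfl

theorem getLast_snd_snd (h : IsPath T c l e) (hl : l ≠ []) : (l.getLast hl).2.2 = e := by
  induction h with
  | nil => simp at hl
  | @cons a l e _ hτ ih =>
    by_cases hτne : l = []
    · subst hτne
      exact nil_iff.1 hτ
    · rw [List.getLast_cons hτne]
      exact ih hτne

theorem getElem_snd_snd (h : IsPath T c l e) (i : ℕ) (hi : i + 1 < l.length) :
    l[i].2.2 = l[i + 1].1 := by
  induction h generalizing i with
  | nil => simp at hi
  | cons _ hτ ih =>
    cases i with
    | zero => exact (hτ.getElem_zero_fst _).symm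
    | succ i => exact ih i _

theorem ofFn {n : ℕ} (m : Fin (n + 1) → AncTrans Q d) (hv : ∀ i, ValidAnc T (m i))
    (hc : ∀ i : Fin n, (m i.castSucc).2.2 = (m i.succ).1) :
    IsPath T (m 0).1 (List.ofFn m) (m (Fin.last n)).2.2 := by
  induction n with
  | zero => exact cons (hv 0) (nil _)
  | succ n ih =>
    rw [List.ofFn_succ]
    refine cons (hv 0) ?_
    rw [← Fin.castSucc_zero, hc 0, ← Fin.succ_last]
    exact ih (fun i => m i.succ) (fun i => hv _) (fun i => by simpa using hc i.succ)

theorem exists_endEmbedding_confAdd {l₁ l₂ : List (AncTrans Q d)} {α β δ₁ δ₂ : Fin d → ℕ}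
    (h : IsPath T c l e) (h₁ : IsPath T (confAdd c α) l₁ (confAdd e δ₁))
    (h₂ : IsPath T (confAdd c β) l₂ (confAdd e δ₂))
    (he₁ : EndEmbedding AncLe l l₁) (he₂ : EndEmbedding AncLe l l₂) :
    ∃ l', IsPath T (confAdd c (α + β)) l' (confAdd e (δ₁ + δ₂)) ∧ EndEmbedding AncLe l l' := by
  induction h generalizing l₁ l₂ α β with
  | nil c =>
    obtain rfl := EndEmbedding.nil_left_iff.1 he₁
    obtain rfl := EndEmbedding.nil_left_iff.1 he₂
    obtain rfl := confAdd_right_injective c (nil_iff.1 h₁)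
    obtain rfl := confAdd_right_injective c (nil_iff.1 h₂)
    exact ⟨[], nil _, EndEmbedding.nil⟩
  | @cons a τ e ha hτ ih =>
    cases he₁ with | @cons _ a₁ _ τ₁ B₁ ha₁ he₁ =>
    cases he₂ with | @cons _ a₂ _ τ₂ B₂ ha₂ he₂ =>
    obtain ⟨m₁, hB₁, h₁⟩ := append_iff.1 h₁
    obtain ⟨m₂, hB₂, h₂⟩ := append_iff.1 h₂
    obtain ⟨rfl, hv₁, hτ₁⟩ := cons_iff.1 h₁
    obtain ⟨rfl, hv₂, hτ₂⟩ := cons_iff.1 h₂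
    obtain ⟨ν₁, rfl⟩ := ha.exists_eq_ancShift hv₁ ha₁
    obtain ⟨ν₂, rfl⟩ := ha.exists_eq_ancShift hv₂ ha₂
    obtain ⟨τ', hτ', he'⟩ := ih hτ₁ hτ₂ he₁ he₂
    refine ⟨(B₁.map (ancShift β) ++ B₂.map (ancShift ν₁)) ++ ancShift (ν₁ + ν₂) a :: τ',
      ?_, EndEmbedding.cons _ (ancLe_ancShift a _) he'⟩
    have p₁ : IsPath T (confAdd a.1 (α + β)) (B₁.map (ancShift β)) (confAdd a.1 (ν₁ + β)) := by
      simpa only [ancShift, confAdd_confAdd] using hB₁.map_ancShift β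
    have p₂ : IsPath T (confAdd a.1 (ν₁ + β)) (B₂.map (ancShift ν₁)) (confAdd a.1 (ν₁ + ν₂)) := by
      simpa only [ancShift, confAdd_confAdd, add_comm ν₁] using hB₂.map_ancShift ν₁
    have p₃ : IsPath T (confAdd a.1 (ν₁ + ν₂)) (ancShift (ν₁ + ν₂) a :: τ')
        (confAdd e (δ₁ + δ₂)) :=
      cons (ha.shift _) hτ'
    exact append_iff.2 ⟨_, append_iff.2 ⟨_, p₁, p₂⟩, p₃⟩

end IsPath

namespace Run

def toList (r : Run Q d T) : List (AncTrans Q d) :=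
  List.ofFn r.m

theorem toList_ne_nil (r : Run Q d T) : r.toList ≠ [] :=
  List.ne_nil_of_length_pos (by simpa [toList] using r.pos)

theorem isPath_toList (r : Run Q d T) : IsPath T r.src r.toList r.trg := by
  obtain ⟨len, pos, m, valid, chain⟩ := r
  obtain ⟨n, rfl⟩ := Nat.exists_eq_add_one_of_ne_zero pos.ne'
  exact IsPath.ofFn m valid fun i => chain i.castSucc i.succ.2

def ofPath {c e : Conf Q d} {l : List (AncTrans Q d)} (h : IsPath T c l e) (hl : l ≠ []) :
    Run Q d T where
  len := l.length
  pos := List.length_pos_iff.2 hl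
  m i := l[i]
  valid i := h.mem_validAnc _ (List.getElem_mem _)
  chain i := h.getElem_snd_snd i

variable {c e : Conf Q d} {l : List (AncTrans Q d)} (h : IsPath T c l e) (hl : l ≠ [])

theorem src_ofPath : (ofPath h hl).src = c :=
  h.getElem_zero_fst _

theorem trg_ofPath : (ofPath h hl).trg = e := by
  have := h.getLast_snd_snd hl
  rwa [List.getLast_eq_getElem] at this

theorem toList_ofPath : (ofPath h hl).toList = l :=
  List.ofFn_getElem

end Run

theorem runEmbed_iff_endEmbedding {ρ ρ' : Run Q d T} :
    RunEmbed ρ ρ' ↔ EndEmbedding AncLe ρ.toList ρ'.toList := by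
  rw [Run.toList, Run.toList, endEmbedding_ofFn_iff]
  refine exists_congr fun f => and_congr_right fun hf => ?_
  rw [Fin.forall_exists_le_iff_val_last ρ.pos hf.monotone]

end VASS

/-- Additivity of runs dominating a fixed run. -/
theorem stmt_6 {Q : Type} {d : ℕ} {T : Set (VTrans Q d)}
    (ρ ρ₁ ρ₂ : Run Q d T)
    (hs₁ : ρ₁.src = ρ.src) (hs₂ : ρ₂.src = ρ.src)
    (h₁ : RunEmbed ρ ρ₁) (h₂ : RunEmbed ρ ρ₂)
    (δ₁ δ₂ : Fin d → ℕ)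
    (ht₁ : ρ₁.trg = confAdd ρ.trg δ₁) (ht₂ : ρ₂.trg = confAdd ρ.trg δ₂) :
    ∃ ρ' : Run Q d T, ρ'.src = ρ.src ∧ RunEmbed ρ ρ' ∧
      ρ'.trg = confAdd ρ.trg (δ₁ + δ₂) := by
  have p₁ := ρ₁.isPath_toList
  have p₂ := ρ₂.isPath_toList
  rw [hs₁, ht₁, ← confAdd_zero ρ.src] at p₁
  rw [hs₂, ht₂, ← confAdd_zero ρ.src] at p₂
  obtain ⟨l', hl', he'⟩ := ρ.isPath_toList.exists_endEmbedding_confAdd p₁ p₂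
    (runEmbed_iff_endEmbedding.1 h₁) (runEmbed_iff_endEmbedding.1 h₂)
  rw [add_zero, confAdd_zero] at hl'
  have hne := he'.ne_nil ρ.toList_ne_nil
  refine ⟨Run.ofPath hl' hne, Run.src_ofPath hl' hne, ?_, Run.trg_ofPath hl' hne⟩
  rw [runEmbed_iff_endEmbedding, Run.toList_ofPath]
  exact he'
end

section
/- Let ρ ⊴ ρ' be runs of a d-VASS V with src(ρ') = src(ρ) and trg(ρ') = trg(ρ) + δ for some δ ∈ ℕ^d. Then for every n ∈ ℕ there exists a run ρ_n of V with src(ρ_n) = src(ρ) and trg(ρ_n) = trg(ρ) + n·δ. -/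
/-!
Since a VASS step can be taken from any larger configuration, a path from `c + u` to `c + w`
can be iterated: `c + n•u` reaches `c + n•w`. Along the embedding `f : ρ ⊴ ρ'`, the run `ρ'`
carries a surplus `Δⱼ` over `ρ` at each matched transition `j` (the same before and after it,
as both runs fire the same transition), and between `f j` and
`f (j + 1)` it leads from `cⱼ + Δⱼ` to `cⱼ + Δⱼ₊₁`, where `cⱼ` is the configuration at
which `ρ` passes from transition `j` to `j + 1` (before the first one, from `src ρ + 0` to
`src ρ + Δ₀`). Pumping each of these segments `n` times and following `ρ` in between
reaches `trg ρ + n•Δ_last = trg ρ + n•δ`.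
-/

section Pumping

variable {Q : Type} {d : ℕ} {T : Set (VTrans Q d)}

theorem confAdd_add (c : Conf Q d) (u v : Fin d → ℕ) :
    confAdd c (u + v) = confAdd (confAdd c u) v := by
  simp only [confAdd, add_assoc]

theorem ConfLe.eq_confAdd_sub {c c' : Conf Q d} (h : ConfLe c c') :
    c' = confAdd c (c'.2 - c.2) :=
  Prod.ext h.1.symm (add_tsub_cancel_of_le h.2).symm

theorem step_iff_exists_validAnc {c c' : Conf Q d} :
    Step T c c' ↔ ∃ t, ValidAnc T (c, t, c') :=
  Iff.rfl

theorem ValidAnc.step {a : AncTrans Q d} (h : ValidAnc T a) : Step T a.1 a.2.2 :=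
  ⟨a.2.1, h⟩

theorem Step.shift {c c' : Conf Q d} (h : Step T c c') (v : Fin d → ℕ) :
    Step T (confAdd c v) (confAdd c' v) := by
  obtain ⟨t, ht, hsrc, htrg, hcount⟩ := h
  refine ⟨t, ht, hsrc, htrg, fun i => ?_⟩
  simp only [confAdd, Pi.add_apply, Nat.cast_add, hcount i]
  ring

theorem Reach.shift {c c' : Conf Q d} (h : Reach T c c') (v : Fin d → ℕ) :
    Reach T (confAdd c v) (confAdd c' v) :=
  Relation.ReflTransGen.lift (confAdd · v) (fun _ _ hstep => hstep.shift v) _ _ h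

instance : Trans (Reach T) (Reach T) (Reach T) := ⟨Relation.ReflTransGen.trans⟩

theorem Reach.pump {c : Conf Q d} {u w : Fin d → ℕ} (h : Reach T (confAdd c u) (confAdd c w))
    (n : ℕ) : Reach T (confAdd c (n • u)) (confAdd c (n • w)) := by
  induction n with
  | zero => rw [zero_smul, zero_smul]; exact Relation.ReflTransGen.refl
  | succ n ih =>
    calc Reach T (confAdd c ((n + 1) • u)) (confAdd (confAdd c w) (n • u)) := by
          rw [succ_nsmul', confAdd_add]; exact h.shift _
      _ = confAdd (confAdd c (n • u)) w := by rw [← confAdd_add, ← confAdd_add, add_comm]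
      Reach T _ (confAdd (confAdd c (n • w)) w) := ih.shift w
      _ = confAdd c ((n + 1) • w) := by rw [← confAdd_add, succ_nsmul]

theorem AncLe.src_eq_confAdd {a a' : AncTrans Q d} (hle : AncLe a a') (ha : ValidAnc T a)
    (ha' : ValidAnc T a') : a'.1 = confAdd a.1 (a'.2.2.2 - a.2.2.2) := by
  obtain ⟨htrans, ⟨hstate, -⟩, -, hcount⟩ := hle
  refine Prod.ext hstate.symm (funext fun i => ?_)
  have h := ha.2.2.2 i
  have h' := ha'.2.2.2 i
  have hi : a.2.2.2 i ≤ a'.2.2.2 i := hcount i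
  rw [← htrans] at h'
  simp only [confAdd, Pi.add_apply, Pi.sub_apply]
  omega

namespace Run

theorem reach_src_src (ρ : Run Q d T) {a b : Fin ρ.len} (hab : a ≤ b) :
    Reach T (ρ.m a).1 (ρ.m b).1 := by
  obtain ⟨a, ha⟩ := a
  obtain ⟨b, hb⟩ := b
  simp only [Fin.mk_le_mk] at hab
  induction b, hab using Nat.le_induction with
  | base => exact Relation.ReflTransGen.refl
  | succ b hab ih =>
    refine (ih (by omega)).tail ?_
    rw [← ρ.chain ⟨b, by omega⟩ hb]
    exact (ρ.valid _).step

theorem reach_trg_src (ρ : Run Q d T) {a b : Fin ρ.len} (hab : a < b) :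
    Reach T (ρ.m a).2.2 (ρ.m b).1 := by
  rw [ρ.chain a (by omega)]
  exact ρ.reach_src_src (Fin.mk_le_of_le_val hab)

def single (a : AncTrans Q d) (ha : ValidAnc T a) : Run Q d T :=
  ⟨1, Nat.one_pos, fun _ => a, fun _ => ha, fun _ h => absurd h (by omega)⟩

def cons (a : AncTrans Q d) (ha : ValidAnc T a) (ρ : Run Q d T) (h : a.2.2 = ρ.src) :
    Run Q d T where
  len := ρ.len + 1
  pos := Nat.succ_pos _
  m := Fin.cons a ρ.m
  valid := Fin.cases ha ρ.valid
  chain i hi := by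
    induction i using Fin.cases with
    | zero => exact h
    | succ i => exact ρ.chain i (by simpa using hi)

theorem trg_cons (a : AncTrans Q d) (ha : ValidAnc T a) (ρ : Run Q d T) (h : a.2.2 = ρ.src) :
    (cons a ha ρ h).trg = ρ.trg := by
  have hpos := ρ.pos
  have hlast :
      (⟨ρ.len + 1 - 1, by omega⟩ : Fin (ρ.len + 1)) = Fin.succ ⟨ρ.len - 1, by omega⟩ :=
    Fin.ext (by simp only [Fin.val_succ]; omega)
  simp only [trg, cons, hlast, Fin.cons_succ]

theorem exists_of_transGen {c c' : Conf Q d} (h : Relation.TransGen (Step T) c c') :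
    ∃ ρ : Run Q d T, ρ.src = c ∧ ρ.trg = c' := by
  induction h using Relation.TransGen.head_induction_on with
  | single hstep =>
    obtain ⟨t, ht⟩ := step_iff_exists_validAnc.1 hstep
    exact ⟨single _ ht, rfl, rfl⟩
  | head hstep _ ih =>
    obtain ⟨t, ht⟩ := step_iff_exists_validAnc.1 hstep
    obtain ⟨ρ, hsrc, htrg⟩ := ih
    exact ⟨cons _ ht ρ hsrc.symm, rfl, (trg_cons ..).trans htrg⟩

end Run

def embedSurplus (ρ ρ' : Run Q d T) (f : Fin ρ.len → Fin ρ'.len) (j : Fin ρ.len) : Fin d → ℕ :=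
  (ρ'.m (f j)).2.2.2 - (ρ.m j).2.2.2

theorem reach_src_confAdd_nsmul_embedSurplus {ρ ρ' : Run Q d T} {f : Fin ρ.len → Fin ρ'.len}
    (hf : StrictMono f) (hle : ∀ j, AncLe (ρ.m j) (ρ'.m (f j))) (hs : ρ'.src = ρ.src)
    (n : ℕ) (j : Fin ρ.len) :
    Reach T ρ.src (confAdd (ρ.m j).1 (n • embedSurplus ρ ρ' f j)) := by
  have hsrc (j) : (ρ'.m (f j)).1 = confAdd (ρ.m j).1 (embedSurplus ρ ρ' f j) :=
    (hle j).src_eq_confAdd (ρ.valid j) (ρ'.valid (f j))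
  have htrg (j) : (ρ'.m (f j)).2.2 = confAdd (ρ.m j).2.2 (embedSurplus ρ ρ' f j) :=
    (hle j).2.2.eq_confAdd_sub
  obtain ⟨j, hj⟩ := j
  induction j with
  | zero =>
    have hprefix : Reach T ρ'.src (ρ'.m (f ⟨0, hj⟩)).1 := ρ'.reach_src_src (Nat.zero_le _)
    rw [hs, hsrc] at hprefix
    have hcycle : Reach T (confAdd ρ.src 0) (confAdd ρ.src (embedSurplus ρ ρ' f ⟨0, hj⟩)) := by
      rwa [confAdd_zero]
    have hpumped := hcycle.pump n
    rwa [smul_zero, confAdd_zero] at hpumped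
  | succ j ih =>
    have hj' : j < ρ.len := by omega
    have hchain : (ρ.m ⟨j, hj'⟩).2.2 = (ρ.m ⟨j + 1, hj⟩).1 := ρ.chain ⟨j, hj'⟩ hj
    have hcycle : Reach T (confAdd (ρ.m ⟨j + 1, hj⟩).1 (embedSurplus ρ ρ' f ⟨j, hj'⟩))
        (confAdd (ρ.m ⟨j + 1, hj⟩).1 (embedSurplus ρ ρ' f ⟨j + 1, hj⟩)) := by
      rw [← hsrc, ← hchain, ← htrg]
      exact ρ'.reach_trg_src (hf (Fin.mk_lt_mk.2 j.lt_succ_self))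
    calc Reach T ρ.src (confAdd (ρ.m ⟨j, hj'⟩).1 (n • embedSurplus ρ ρ' f ⟨j, hj'⟩)) := ih hj'
      Reach T _ (confAdd (ρ.m ⟨j + 1, hj⟩).1 (n • embedSurplus ρ ρ' f ⟨j, hj'⟩)) := by
        rw [← hchain]; exact .single ((ρ.valid _).step.shift _)
      Reach T _ _ := hcycle.pump n

end Pumping

/-- Pumping: a dominating run with target surplus δ can be iterated n times. -/
theorem stmt_7 {Q : Type} {d : ℕ} {T : Set (VTrans Q d)}
    (ρ ρ' : Run Q d T) (h : RunEmbed ρ ρ')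
    (hs : ρ'.src = ρ.src) (δ : Fin d → ℕ) (ht : ρ'.trg = confAdd ρ.trg δ) :
    ∀ n : ℕ, ∃ ρₙ : Run Q d T, ρₙ.src = ρ.src ∧ ρₙ.trg = confAdd ρ.trg (n • δ) := by
  obtain ⟨f, hf, hlast, hle⟩ := h
  intro n
  set last : Fin ρ.len := ⟨ρ.len - 1, by have := ρ.pos; omega⟩
  have hsurplus : embedSurplus ρ ρ' f last = δ := by
    have hmatch : (ρ'.m (f last)).2.2 = ρ'.trg := congrArg (fun i => (ρ'.m i).2.2) (Fin.ext hlast)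
    rw [embedSurplus, hmatch, ht]
    exact add_tsub_cancel_left _ _
  have hreach := reach_src_confAdd_nsmul_embedSurplus hf hle hs n last
  obtain ⟨ρₙ, hsrc, htrg⟩ :=
    Run.exists_of_transGen (Relation.TransGen.tail' hreach ((ρ.valid last).step.shift _))
  exact ⟨ρₙ, hsrc, by rw [htrg, hsurplus]; rfl⟩
end

section
/- For each n ≥ 1 there exist n rational numbers 1 < f_1 < ... < f_n = 1 + 1/4^n, each of description size at most 4^{n²+n}, such that the description size of f = (f_n)^{2^n} · ... · (f_2)^{2^2} · (f_1)^{2^1} is at most 4^{2(n²+n)}. -/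
/-
Put ε = 4⁻ⁿ and N = 4ⁿ·2ⁿ⁻¹. Starting from G₀ = 1 + ε, let G_{k+1} be G_k²·(1 + ε/2^(k+1))
rounded up to the next multiple of 1/N, and take as fractions the defects G₀, G₁/G₀², G₂/G₁², …
in reverse order. The weighted product of the defects telescopes to G_{n-1}², and every defect is
a quotient of the integers N·G_k and N, so all description sizes are polynomial in N.
As the rounding error 1/N stays below the slack ε/2^(k+1), the k-th defect lies in
[1 + ε/2^k, 1 + 2ε/2^k), so the defects strictly decrease; and G_k < (1 + ε)^(2^(k+1)) ≤ 2 keeps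
the numerators N·G_k below 2N = 8ⁿ. For n = 2 the bound (2N)² ≤ 4^(n²+n) is tight, which is what
fixes N.
-/

/-- The description size of a rational: the maximum of the absolute value of the
numerator and the denominator of its irreducible form. -/
def descSize (q : ℚ) : ℕ := max q.num.natAbs q.den

open Finset

section SqRatio

variable {K : Type*} [CommGroupWithZero K]

def sqRatio (G : ℕ → K) : ℕ → K
  | 0 => G 0
  | k + 1 => G (k + 1) / G k ^ 2

lemma prod_sqRatio_pow {G : ℕ → K} (hG : ∀ k, G k ≠ 0) (m : ℕ) :
    ∏ k ∈ range (m + 1), sqRatio G k ^ 2 ^ (m - k) = G m := by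
  induction m with
  | zero => simp [sqRatio]
  | succ m ih =>
    have hsq : ∏ k ∈ range (m + 1), sqRatio G k ^ 2 ^ (m + 1 - k) = G m ^ 2 := by
      rw [← ih, ← prod_pow]
      refine prod_congr rfl fun k hk => ?_
      rw [← pow_mul, ← pow_succ, Nat.sub_add_comm (mem_range_succ_iff.1 hk)]
    rw [prod_range_succ, hsq, Nat.sub_self, pow_zero, pow_one, sqRatio,
      mul_div_cancel₀ _ (pow_ne_zero 2 (hG m))]

lemma prod_sqRatio_rev_pow {G : ℕ → K} (hG : ∀ k, G k ≠ 0) (m : ℕ) :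
    ∏ i : Fin (m + 1), sqRatio G i.rev ^ 2 ^ (i.1 + 1) = G m ^ 2 := by
  rw [← prod_sqRatio_pow hG, ← prod_pow, ← prod_range_reflect, ← Fin.prod_univ_eq_prod_range]
  refine Fintype.prod_congr _ _ fun ⟨i, hi⟩ => ?_
  rw [Fin.val_rev, ← pow_mul, ← pow_succ, show m + 1 - (i + 1) = m + 1 - 1 - i by omega,
    show m - (m + 1 - 1 - i) = i by omega]

end SqRatio

section RoundUp

variable {K : Type*} [Field K] [LinearOrder K] [IsStrictOrderedRing K] [FloorSemiring K]

def roundUp (N : ℕ) (q : K) : K := (⌊q * N⌋₊ + 1) / N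

lemma lt_roundUp {N : ℕ} (hN : 0 < N) (q : K) : q < roundUp N q := by
  rw [roundUp, lt_div_iff₀ (by positivity)]
  exact Nat.lt_floor_add_one _

lemma roundUp_le {N : ℕ} (hN : 0 < N) {q : K} (hq : 0 ≤ q) : roundUp N q ≤ q + 1 / N := by
  have hN' : (0 : K) < N := by positivity
  rw [roundUp, div_le_iff₀ hN', add_mul, one_div_mul_cancel hN'.ne']
  gcongr
  exact Nat.floor_le (by positivity)

lemma roundUp_mul_self {N : ℕ} (hN : 0 < N) (q : K) :
    roundUp N q * N = (⌊q * N⌋₊ + 1 : ℕ) := by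
  rw [roundUp, div_mul_cancel₀ _ (by positivity)]
  push_cast
  rfl

lemma one_add_pow_le_two {x : K} (hx : 0 ≤ x) {m : ℕ} (h : 2 * m * x ≤ 1) :
    (1 + x) ^ m ≤ 2 := by
  rcases m.eq_zero_or_pos with rfl | hm
  · norm_num
  have hx1 : x ≤ 1 := by
    have : x ≤ m * x := le_mul_of_one_le_left hx (by exact_mod_cast hm)
    linarith
  have hsub : 1 - m * x ≤ (1 - x) ^ m := by
    simpa [sub_eq_add_neg] using one_add_mul_le_pow (a := -x) (by linarith) m
  have hprod : (1 + x) ^ m * (1 - x) ^ m ≤ 1 := by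
    rw [← mul_pow]
    exact pow_le_one₀ (by nlinarith) (by nlinarith)
  nlinarith [pow_nonneg (by linarith : (0 : K) ≤ 1 + x) m]

end RoundUp

lemma descSize_le_of_mul_eq {q : ℚ} {a b : ℕ} (hb : 0 < b) (h : q * b = a) :
    descSize q ≤ max a b := by
  have hq : q = Rat.divInt a b := by
    rw [Rat.divInt_eq_div, eq_div_of_mul_eq (by positivity) h]
    push_cast
    rfl
  rcases a.eq_zero_or_pos with rfl | ha
  · simp only [hq, descSize, Nat.cast_zero, Rat.zero_divInt, Rat.num_zero, Int.natAbs_zero,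
      Rat.den_zero]
    omega
  refine max_le_max (Nat.le_of_dvd ha ?_) (Nat.le_of_dvd hb ?_)
  · have := Int.natAbs_dvd_natAbs.2 (hq ▸ Rat.num_dvd a (b := b) (by positivity))
    rwa [Int.natAbs_natCast] at this
  · exact_mod_cast hq ▸ Rat.den_dvd a b

namespace FractionsLemma

def scale (n : ℕ) : ℕ := 4 ^ n * 2 ^ (n - 1)

def iterSq (n : ℕ) : ℕ → ℚ
  | 0 => 1 + 1 / 4 ^ n
  | k + 1 => roundUp (scale n) (iterSq n k ^ 2 * (1 + 1 / (4 ^ n * 2 ^ (k + 1))))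

variable {n k : ℕ}

lemma scale_pos (n : ℕ) : 0 < scale n := by
  unfold scale
  positivity

lemma two_mul_scale (hn : 1 ≤ n) : 2 * scale n = 8 ^ n := by
  obtain ⟨m, rfl⟩ : ∃ m, n = m + 1 := ⟨n - 1, by omega⟩
  simp only [scale, Nat.add_sub_cancel, show (8 : ℕ) = 4 * 2 by rfl, mul_pow, pow_succ]
  ring

lemma le_scale (hk : k + 2 ≤ n) : 4 ^ n * 2 ^ (k + 1) ≤ scale n := by
  unfold scale
  gcongr
  · norm_num
  · omega

lemma one_lt_iterSq (n k : ℕ) : 1 < iterSq n k := by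
  induction k with
  | zero =>
    simp only [iterSq, lt_add_iff_pos_right]
    positivity
  | succ k ih =>
    calc (1 : ℚ) ≤ iterSq n k ^ 2 * (1 + 1 / (4 ^ n * 2 ^ (k + 1))) := by
          have : (0 : ℚ) ≤ 1 / (4 ^ n * 2 ^ (k + 1)) := by positivity
          nlinarith [one_lt_pow₀ ih two_ne_zero]
      _ < iterSq n (k + 1) := lt_roundUp (scale_pos n) _

lemma iterSq_succ_lt (hk : k + 2 ≤ n) :
    iterSq n (k + 1) < iterSq n k ^ 2 * (1 + 2 / (4 ^ n * 2 ^ (k + 1))) := by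
  have hG : 1 < iterSq n k ^ 2 := one_lt_pow₀ (one_lt_iterSq n k) two_ne_zero
  calc iterSq n (k + 1)
      ≤ iterSq n k ^ 2 * (1 + 1 / (4 ^ n * 2 ^ (k + 1))) + 1 / scale n :=
        roundUp_le (scale_pos n) (by positivity)
    _ ≤ iterSq n k ^ 2 * (1 + 1 / (4 ^ n * 2 ^ (k + 1))) + 1 / (4 ^ n * 2 ^ (k + 1)) := by
        gcongr
        exact_mod_cast le_scale hk
    _ < iterSq n k ^ 2 * (1 + 2 / (4 ^ n * 2 ^ (k + 1))) := by
        have : (0 : ℚ) < 1 / (4 ^ n * 2 ^ (k + 1)) := by positivity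
        rw [show (2 : ℚ) / (4 ^ n * 2 ^ (k + 1)) = 2 * (1 / (4 ^ n * 2 ^ (k + 1))) by ring]
        nlinarith

lemma one_add_mul_iterSq_le (hk : k < n) :
    (1 + 1 / 4 ^ n) * iterSq n k ≤ (1 + 1 / 4 ^ n) ^ 2 ^ (k + 1) := by
  induction k with
  | zero => simp [iterSq, sq]
  | succ k ih =>
    have hy : (2 : ℚ) / (4 ^ n * 2 ^ (k + 1)) ≤ 1 / 4 ^ n := by
      calc (2 : ℚ) / (4 ^ n * 2 ^ (k + 1)) = 1 / (4 ^ n * 2 ^ k) := by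
            rw [pow_succ]
            field_simp
        _ ≤ 1 / 4 ^ n := by
            gcongr
            exact le_mul_of_one_le_right (by positivity) (one_le_pow₀ (by norm_num))
    calc (1 + 1 / 4 ^ n) * iterSq n (k + 1)
        ≤ (1 + 1 / 4 ^ n) * (iterSq n k ^ 2 * (1 + 1 / 4 ^ n)) := by
          gcongr
          exact (iterSq_succ_lt hk).le.trans (by gcongr)
      _ = ((1 + 1 / 4 ^ n) * iterSq n k) ^ 2 := by ring
      _ ≤ ((1 + 1 / 4 ^ n) ^ 2 ^ (k + 1)) ^ 2 := by
          have := one_lt_iterSq n k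
          exact pow_le_pow_left₀ (by positivity) (ih (by omega)) 2
      _ = (1 + 1 / 4 ^ n) ^ 2 ^ (k + 1 + 1) := by rw [← pow_mul, ← pow_succ]

lemma iterSq_lt_two (hk : k < n) : iterSq n k < 2 := by
  have hpow : (1 + 1 / 4 ^ n : ℚ) ^ 2 ^ (k + 1) ≤ 2 := by
    apply one_add_pow_le_two (by positivity)
    have : (2 : ℚ) * 2 ^ (k + 1) ≤ 4 ^ n := by
      rw [← pow_succ', show (4 : ℚ) ^ n = 2 ^ (2 * n) by rw [pow_mul]; norm_num]
      exact pow_le_pow_right₀ (by norm_num) (by omega)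
    rw [mul_one_div, div_le_one (by positivity)]
    exact_mod_cast this
  have := one_add_mul_iterSq_le hk
  have : (0 : ℚ) < 1 / 4 ^ n := by positivity
  nlinarith [one_lt_iterSq n k]

lemma exists_iterSq_mul_scale_eq (n k : ℕ) : ∃ m : ℕ, iterSq n k * scale n = m := by
  cases k with
  | zero =>
    refine ⟨scale n + 2 ^ (n - 1), ?_⟩
    simp only [iterSq, scale]
    push_cast
    field_simp
  | succ k => exact ⟨_, roundUp_mul_self (scale_pos n) _⟩

lemma exists_iterSq_mul_scale_eq_lt (hk : k < n) :
    ∃ m : ℕ, iterSq n k * scale n = m ∧ m < 8 ^ n := by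
  obtain ⟨m, hm⟩ := exists_iterSq_mul_scale_eq n k
  refine ⟨m, hm, ?_⟩
  have h2 : ((2 * scale n : ℕ) : ℚ) = 8 ^ n := by rw [two_mul_scale (by omega)]; push_cast; rfl
  have : (m : ℚ) < 8 ^ n := by
    rw [← hm, ← h2]
    push_cast
    have := scale_pos n
    have := iterSq_lt_two hk
    gcongr
  exact_mod_cast this

lemma sqRatio_iterSq_mem_Ico (hk : k < n) :
    sqRatio (iterSq n) k ∈ Set.Ico (1 + 1 / (4 ^ n * 2 ^ k)) (1 + 2 / (4 ^ n * 2 ^ k)) := by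
  cases k with
  | zero =>
    simp only [sqRatio, iterSq, pow_zero, mul_one, Set.mem_Ico, le_refl, true_and,
      add_lt_add_iff_left]
    gcongr
    norm_num
  | succ k =>
    have hG : (0 : ℚ) < iterSq n k ^ 2 := pow_pos (zero_lt_one.trans (one_lt_iterSq n k)) 2
    rw [sqRatio, Set.mem_Ico, le_div_iff₀ hG, div_lt_iff₀ hG, mul_comm _ (iterSq n k ^ 2),
      mul_comm _ (iterSq n k ^ 2)]
    exact ⟨(lt_roundUp (scale_pos n) _).le, iterSq_succ_lt (by omega)⟩

lemma sqRatio_iterSq_strictAntiOn (n : ℕ) : StrictAntiOn (sqRatio (iterSq n)) (Set.Iio n) := by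
  intro j hj k hk hjk
  have hpow : (2 : ℚ) * 2 ^ j ≤ 2 ^ k := by
    rw [← pow_succ']
    exact pow_le_pow_right₀ (by norm_num) hjk
  calc sqRatio (iterSq n) k < 1 + 2 / (4 ^ n * 2 ^ k) := (sqRatio_iterSq_mem_Ico hk).2
    _ ≤ 1 + 1 / (4 ^ n * 2 ^ j) := by
        rw [add_le_add_iff_left, div_le_div_iff₀ (by positivity) (by positivity)]
        nlinarith [pow_pos (by norm_num : (0 : ℚ) < 4) n]
    _ ≤ sqRatio (iterSq n) j := (sqRatio_iterSq_mem_Ico hj).1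

lemma eight_pow_sq (n : ℕ) : (8 ^ n) ^ 2 = 4 ^ (3 * n) := by
  rw [← pow_mul, mul_comm, pow_mul, pow_mul]
  norm_num

lemma descSize_sqRatio_iterSq_le (hk : k < n) :
    descSize (sqRatio (iterSq n) k) ≤ 4 ^ (n ^ 2 + n) := by
  have hN := two_mul_scale (n := n) (by omega)
  cases k with
  | zero =>
    obtain ⟨m, hm, hm8⟩ := exists_iterSq_mul_scale_eq_lt hk
    calc descSize (sqRatio (iterSq n) 0) ≤ max m (scale n) := descSize_le_of_mul_eq (scale_pos n) hm
      _ ≤ 8 ^ n := max_le hm8.le (by omega)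
      _ ≤ 16 ^ n := Nat.pow_le_pow_left (by norm_num) n
      _ = 4 ^ (2 * n) := by rw [pow_mul]; norm_num
      _ ≤ 4 ^ (n ^ 2 + n) := Nat.pow_le_pow_right (by norm_num) (by nlinarith)
  | succ k =>
    obtain ⟨a, ha, ha8⟩ := exists_iterSq_mul_scale_eq_lt (n := n) (k := k) (by omega)
    obtain ⟨b, hb, hb8⟩ := exists_iterSq_mul_scale_eq_lt hk
    have hG : iterSq n k ≠ 0 := (zero_lt_one.trans (one_lt_iterSq n k)).ne'
    have hq : sqRatio (iterSq n) (k + 1) * (a ^ 2 : ℕ) = (b * scale n : ℕ) := by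
      push_cast
      rw [← ha, ← hb, sqRatio]
      field_simp
    have ha0 : (0 : ℚ) < a := by
      rw [← ha]
      exact mul_pos (zero_lt_one.trans (one_lt_iterSq n k)) (mod_cast scale_pos n)
    calc descSize (sqRatio (iterSq n) (k + 1)) ≤ max (b * scale n) (a ^ 2) :=
          descSize_le_of_mul_eq (pow_pos (mod_cast ha0) 2) hq
      _ ≤ 4 ^ (3 * n) := by
          rw [← eight_pow_sq, sq, sq]
          exact max_le (by gcongr; omega) (by gcongr)
      _ ≤ 4 ^ (n ^ 2 + n) := Nat.pow_le_pow_right (by norm_num) (by nlinarith)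

lemma descSize_iterSq_sq_le (hk : k < n) :
    descSize (iterSq n k ^ 2) ≤ 4 ^ (2 * (n ^ 2 + n)) := by
  have hN := two_mul_scale (n := n) (by omega)
  obtain ⟨m, hm, hm8⟩ := exists_iterSq_mul_scale_eq_lt hk
  have hq : iterSq n k ^ 2 * (scale n ^ 2 : ℕ) = (m ^ 2 : ℕ) := by
    push_cast
    rw [← hm]
    ring
  calc descSize (iterSq n k ^ 2) ≤ max (m ^ 2) (scale n ^ 2) :=
        descSize_le_of_mul_eq (pow_pos (scale_pos n) 2) hq
    _ ≤ 4 ^ (3 * n) := by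
        rw [← eight_pow_sq]
        exact max_le (by gcongr) (by gcongr; omega)
    _ ≤ 4 ^ (2 * (n ^ 2 + n)) := Nat.pow_le_pow_right (by norm_num) (by nlinarith)

end FractionsLemma

open FractionsLemma in
/-- Lemma on fractions: there are n rationals 1 < f₁ < ... < fₙ = 1 + 1/4ⁿ of description
size at most 4^(n²+n) whose product of powers f = Π fᵢ^(2ⁱ) has description size at most
4^(2(n²+n)). -/
theorem stmt_12 (n : ℕ) (hn : 1 ≤ n) :
    ∃ f : Fin n → ℚ,
      (∀ i : Fin n, 1 < f i) ∧
      StrictMono f ∧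
      f ⟨n - 1, by omega⟩ = 1 + 1 / 4 ^ n ∧
      (∀ i : Fin n, descSize (f i) ≤ 4 ^ (n ^ 2 + n)) ∧
      descSize (∏ i : Fin n, (f i) ^ (2 ^ (i.1 + 1))) ≤ 4 ^ (2 * (n ^ 2 + n)) := by
  obtain ⟨m, rfl⟩ : ∃ m, n = m + 1 := ⟨n - 1, by omega⟩
  refine ⟨fun i => sqRatio (iterSq (m + 1)) i.rev, fun i => ?_, fun i j hij => ?_, ?_,
    fun i => descSize_sqRatio_iterSq_le i.rev.2, ?_⟩
  · exact lt_of_lt_of_le (by simp only [lt_add_iff_pos_right]; positivity)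
      (sqRatio_iterSq_mem_Ico i.rev.2).1
  · exact sqRatio_iterSq_strictAntiOn _ j.rev.2 i.rev.2 (Fin.rev_lt_rev.2 hij)
  · simp [Fin.rev, sqRatio, iterSq]
  · rw [prod_sqRatio_rev_pow fun k => (zero_lt_one.trans (one_lt_iterSq _ k)).ne']
    exact descSize_iterSq_sq_le (Nat.lt_succ_self m)
end

section
/- Let Lin_1, Lin_2 : ℕ^d → ℕ be reduced linear functions with disjoint supports, let R ∈ ℚ, and let Δ ∈ ℕ^d satisfy Lin_1(Δ) = R·Lin_2(Δ) with proj_I(Δ) ≠ 0 where I = supp(Lin_1) ∪ supp(Lin_2). Let L = b + ℕ·p_1 + ... + ℕ·p_k be a linear set containing a + nΔ for infinitely many n ∈ ℕ, such that every period p of L satisfies Lin_1(Δ)·Lin_2(p) ≤ Lin_2(Δ)·Lin_1(p). Then L has a period p with proj_I(p) ≠ 0 and Lin_1(p)·Lin_2(Δ) = Lin_2(p)·Lin_1(Δ). -/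
/-- Final counting argument of the generalised theorem: a linear set containing infinitely
many points of the line `a + ℕΔ`, all of whose periods have ratio at most that of `Δ`,
must contain a period with exactly the ratio of `Δ` and nonzero projection to the supports. -/
theorem stmt_13 {d : ℕ} (c₁ c₂ : Fin d → ℕ)
    (hred₁ : Finset.univ.gcd c₁ = 1) (hred₂ : Finset.univ.gcd c₂ = 1)
    (hdisj : ∀ i, c₁ i = 0 ∨ c₂ i = 0)
    (R : ℚ) (Δ : Fin d → ℕ)
    (hRΔ : ((∑ i, c₁ i * Δ i : ℕ) : ℚ) = R * ((∑ i, c₂ i * Δ i : ℕ) : ℚ))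
    (hΔI : ∃ i, (c₁ i ≠ 0 ∨ c₂ i ≠ 0) ∧ Δ i ≠ 0)
    (a b : Fin d → ℕ) (k : ℕ) (p : Fin k → (Fin d → ℕ))
    (L : Set (Fin d → ℕ))
    (hL : L = {v | ∃ coef : Fin k → ℕ, v = b + ∑ j, coef j • p j})
    (hinf : {n : ℕ | a + n • Δ ∈ L}.Infinite)
    (hper : ∀ j : Fin k,
      (∑ i, c₁ i * Δ i) * (∑ i, c₂ i * p j i) ≤ (∑ i, c₂ i * Δ i) * (∑ i, c₁ i * p j i)) :
    ∃ j : Fin k, (∃ i, (c₁ i ≠ 0 ∨ c₂ i ≠ 0) ∧ p j i ≠ 0) ∧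
      (∑ i, c₁ i * p j i) * (∑ i, c₂ i * Δ i) = (∑ i, c₂ i * p j i) * (∑ i, c₁ i * Δ i) := by
  set A := ∑ i, c₁ i * Δ i with hAdef
  set B := ∑ i, c₂ i * Δ i with hBdef
  set L1 := fun j => ∑ i, c₁ i * p j i with hL1def
  set L2 := fun j => ∑ i, c₂ i * p j i with hL2def
  -- B > 0
  have hBpos : 0 < B := by
    obtain ⟨i, hci, hΔi⟩ := hΔI
    rcases hci with h1 | h2
    · have hApos : 0 < A :=
        lt_of_lt_of_le (Nat.mul_pos (Nat.pos_of_ne_zero h1) (Nat.pos_of_ne_zero hΔi))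
          (Finset.single_le_sum (f := fun i => c₁ i * Δ i)
            (fun _ _ => Nat.zero_le _) (Finset.mem_univ i))
      rcases Nat.eq_zero_or_pos B with hB0 | hB
      · rw [hB0] at hRΔ; simp at hRΔ; omega
      · exact hB
    · exact lt_of_lt_of_le (Nat.mul_pos (Nat.pos_of_ne_zero h2) (Nat.pos_of_ne_zero hΔi))
        (Finset.single_le_sum (f := fun i => c₂ i * Δ i)
          (fun _ _ => Nat.zero_le _) (Finset.mem_univ i))
  by_contra hcon
  push_neg at hcon
  -- key pointwise claim under the negation of the conclusion
  have claim : ∀ j, L2 j ≤ L2 j * (B * L1 j - A * L2 j) := by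
    intro j
    by_cases hproj : ∃ i, (c₁ i ≠ 0 ∨ c₂ i ≠ 0) ∧ p j i ≠ 0
    · have hne := hcon j hproj
      have hlt : A * L2 j < B * L1 j :=
        lt_of_le_of_ne (hper j) (fun h => hne (by rw [mul_comm (L1 j), mul_comm (L2 j)]; exact h.symm))
      exact le_mul_of_one_le_right (Nat.zero_le _) (Nat.sub_pos_of_lt hlt)
    · push_neg at hproj
      have h0 : L2 j = 0 := by
        apply Finset.sum_eq_zero
        intro i _
        rcases Nat.eq_zero_or_pos (c₂ i) with h | h
        · simp [h]
        · rw [hproj i (Or.inr h.ne'), mul_zero]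
      simp [h0]
  -- constants
  set ca1 := ∑ i, c₁ i * a i with hca1
  set ca2 := ∑ i, c₂ i * a i with hca2
  set cb1 := ∑ i, c₁ i * b i with hcb1
  set cb2 := ∑ i, c₂ i * b i with hcb2
  set M := ∑ j, L2 j with hM
  -- pick a large point on the line inside L
  obtain ⟨n, hnS, hn⟩ := hinf.exists_gt (cb2 + M * (B * ca1 + A * cb2))
  have hnL : a + n • Δ ∈ L := hnS
  rw [hL] at hnL
  obtain ⟨coef, hcoef⟩ := hnL
  have hfun : ∀ i, a i + n * Δ i = b i + ∑ j, coef j * p j i := by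
    intro i
    have h := congrFun hcoef i
    simpa [Finset.sum_apply] using h
  -- linear functionals applied to the equation
  have E : ∀ c : Fin d → ℕ, ∑ i, c i * a i + n * (∑ i, c i * Δ i)
      = ∑ i, c i * b i + ∑ j, coef j * (∑ i, c i * p j i) := by
    intro c
    have h : ∑ i, c i * (a i + n * Δ i) = ∑ i, c i * (b i + ∑ j, coef j * p j i) :=
      Finset.sum_congr rfl (fun i _ => by rw [hfun i])
    calc ∑ i, c i * a i + n * (∑ i, c i * Δ i)
        = ∑ i, c i * (a i + n * Δ i) := by
          rw [Finset.mul_sum, ← Finset.sum_add_distrib]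
          exact Finset.sum_congr rfl (fun i _ => by ring)
      _ = ∑ i, c i * (b i + ∑ j, coef j * p j i) := h
      _ = ∑ i, c i * b i + ∑ i, c i * ∑ j, coef j * p j i := by
          rw [← Finset.sum_add_distrib]
          exact Finset.sum_congr rfl (fun i _ => by ring)
      _ = ∑ i, c i * b i + ∑ j, coef j * (∑ i, c i * p j i) := by
          congr 1
          simp_rw [Finset.mul_sum]
          rw [Finset.sum_comm]
          exact Finset.sum_congr rfl fun j _ =>
            Finset.sum_congr rfl fun i _ => by ring
  have E1 : ca1 + n * A = cb1 + ∑ j, coef j * L1 j := E c₁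
  have E2 : ca2 + n * B = cb2 + ∑ j, coef j * L2 j := E c₂
  set S1 := ∑ j, coef j * L1 j with hS1
  set S2 := ∑ j, coef j * L2 j with hS2
  set D := ∑ j, coef j * (B * L1 j - A * L2 j) with hD
  have hBS1 : B * S1 = A * S2 + D := by
    rw [hS1, hS2, hD, Finset.mul_sum, Finset.mul_sum, ← Finset.sum_add_distrib]
    refine Finset.sum_congr rfl fun j _ => ?_
    obtain ⟨e, he⟩ : ∃ e, B * L1 j = A * L2 j + e := ⟨_, (Nat.add_sub_cancel' (hper j)).symm⟩
    have h2 : B * L1 j - A * L2 j = e := by omega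
    rw [h2]
    calc B * (coef j * L1 j) = coef j * (B * L1 j) := by ring
      _ = coef j * (A * L2 j) + coef j * e := by rw [he]; ring
      _ = A * (coef j * L2 j) + coef j * e := by ring
  have hMle : ∀ j, L2 j ≤ M :=
    fun j => Finset.single_le_sum (fun _ _ => Nat.zero_le _) (Finset.mem_univ j)
  have hS2le : S2 ≤ M * D := by
    calc S2 ≤ ∑ j, coef j * (L2 j * (B * L1 j - A * L2 j)) :=
          Finset.sum_le_sum fun j _ => Nat.mul_le_mul_left _ (claim j)
      _ ≤ ∑ j, coef j * (M * (B * L1 j - A * L2 j)) :=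
          Finset.sum_le_sum fun j _ =>
            Nat.mul_le_mul_left _ (Nat.mul_le_mul_right _ (hMle j))
      _ = M * D := by
          rw [hD, Finset.mul_sum]
          exact Finset.sum_congr rfl fun j _ => by ring
  -- now pass to ℤ and derive the contradiction
  have E1' : (ca1 : ℤ) + n * A = cb1 + S1 := by exact_mod_cast congrArg (Nat.cast : ℕ → ℤ) E1
  have E2' : (ca2 : ℤ) + n * B = cb2 + S2 := by exact_mod_cast congrArg (Nat.cast : ℕ → ℤ) E2
  have hBS1' : (B : ℤ) * S1 = A * S2 + D := by exact_mod_cast congrArg (Nat.cast : ℕ → ℤ) hBS1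
  have hS2le' : (S2 : ℤ) ≤ M * D := by exact_mod_cast hS2le
  have hn' : (cb2 : ℤ) + M * (B * ca1 + A * cb2) < n := by exact_mod_cast hn
  have e1 : (B : ℤ) * ca1 + n * A * B = B * cb1 + B * S1 := by linear_combination (B : ℤ) * E1'
  have e2 : (A : ℤ) * ca2 + n * A * B = A * cb2 + A * S2 := by linear_combination (A : ℤ) * E2'
  have hDle : (D : ℤ) ≤ B * ca1 + A * cb2 := by
    have h1 : (0 : ℤ) ≤ A * ca2 := by positivity
    have h2 : (0 : ℤ) ≤ B * cb1 := by positivity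
    linarith [e1, e2, hBS1']
  have hMD : (M : ℤ) * D ≤ M * (B * ca1 + A * cb2) :=
    mul_le_mul_of_nonneg_left hDle (by positivity)
  have hnB : (n : ℤ) ≤ n * B :=
    le_mul_of_one_le_right (by positivity) (by exact_mod_cast hBpos)
  have hca2nn : (0 : ℤ) ≤ ca2 := by positivity
  linarith [E2', hS2le', hMD, hnB, hn', hca2nn]
end

section
/- Let L = b + ℕ p_1 + ... + ℕ p_k be a linear set in ℕ^d, let a, Δ ∈ ℕ^d with Δ zero outside the first two coordinates, and suppose a + nΔ ∈ L for arbitrarily large n. Then, writing P_0 for the set of periods p_i that are zero on coordinates 3..d and P_{≠0} for the rest, there is a bound B (depending only on a, b, k and the norms of periods in P_{≠0}, not on n) such that for infinitely many n there is a vector v with norm at most B and coefficients n_i ∈ ℕ with v + nΔ = Σ_{p_i ∈ P_0} n_i p_i. -/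
/-- In representations `a + nΔ = b + Σ nᵢpᵢ` of points of a line supported on the first two
coordinates, the contribution of periods with a nonzero coordinate in `[3,d]` is uniformly
bounded: there is a bound `B` independent of `n` such that for infinitely many `n` one has
`v + nΔ = Σ_{pᵢ ∈ P₀} nᵢpᵢ` for some `v` of norm at most `B`. -/
theorem stmt_19 {d : ℕ} (a Δ b : Fin d → ℕ)
    (hΔ : ∀ i : Fin d, 2 ≤ i.1 → Δ i = 0)
    (k : ℕ) (p : Fin k → (Fin d → ℕ))
    (L : Set (Fin d → ℕ))
    (hL : L = {v | ∃ c : Fin k → ℕ, v = b + ∑ j, c j • p j})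
    (hinf : ∀ N : ℕ, ∃ n : ℕ, N ≤ n ∧ a + n • Δ ∈ L) :
    ∃ B : ℕ, ∀ N : ℕ, ∃ n : ℕ, N ≤ n ∧
      ∃ v : Fin d → ℤ, (∀ i, |v i| ≤ (B : ℤ)) ∧
        ∃ c : Fin k → ℕ, ∀ i : Fin d,
          v i + (n : ℤ) * (Δ i : ℤ)
            = ∑ j ∈ Finset.univ.filter (fun j : Fin k => ∀ l : Fin d, 2 ≤ l.1 → p j l = 0),
                (c j : ℤ) * (p j i : ℤ) := by
  classical
  set S : Finset (Fin k) :=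
    Finset.univ.filter (fun j : Fin k => ∀ l : Fin d, 2 ≤ l.1 → p j l = 0) with hS
  refine ⟨(∑ i, a i) + (∑ i, b i) + ∑ j, (∑ l, a l) * (∑ i, p j i), fun N => ?_⟩
  obtain ⟨n, hn, hmem⟩ := hinf N
  rw [hL] at hmem
  obtain ⟨c, hc⟩ := hmem
  have heq : ∀ i, a i + n * Δ i = b i + ∑ j, c j * p j i := by
    intro i
    have := congrFun hc i
    simpa [Finset.sum_apply, smul_eq_mul] using this
  have hcb : ∀ j, j ∉ S → c j ≤ ∑ l, a l := by
    intro j hj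
    simp only [hS, Finset.mem_filter, Finset.mem_univ, true_and, not_forall] at hj
    obtain ⟨l, hl2, hpl⟩ := hj
    have h1 : c j * p j l ≤ a l := by
      have h := heq l
      rw [hΔ l hl2, mul_zero, add_zero] at h
      calc c j * p j l ≤ ∑ j', c j' * p j' l :=
            Finset.single_le_sum (f := fun j' => c j' * p j' l)
              (fun _ _ => Nat.zero_le _) (Finset.mem_univ j)
        _ ≤ a l := by omega
    have h2 : c j ≤ c j * p j l :=
      Nat.le_mul_of_pos_right _ (Nat.pos_of_ne_zero hpl)
    exact (h2.trans h1).trans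
      (Finset.single_le_sum (fun _ _ => Nat.zero_le _) (Finset.mem_univ l))
  refine ⟨n, hn, fun i => (a i : ℤ) - b i - ∑ j ∈ Sᶜ, (c j : ℤ) * p j i, ?_, c, ?_⟩
  · intro i
    dsimp only
    set B : ℕ := (∑ i, a i) + (∑ i, b i) + ∑ j, (∑ l, a l) * (∑ i, p j i) with hB
    have ha : a i ≤ B := by
      have := Finset.single_le_sum (f := a) (fun _ _ => Nat.zero_le _) (Finset.mem_univ i)
      omega
    have hbs : b i + ∑ j ∈ Sᶜ, c j * p j i ≤ B := by
      have hb : b i ≤ ∑ i, b i :=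
        Finset.single_le_sum (fun _ _ => Nat.zero_le _) (Finset.mem_univ i)
      have hsum : ∑ j ∈ Sᶜ, c j * p j i ≤ ∑ j, (∑ l, a l) * (∑ i, p j i) := by
        calc ∑ j ∈ Sᶜ, c j * p j i ≤ ∑ j ∈ Sᶜ, (∑ l, a l) * (∑ i', p j i') := by
              apply Finset.sum_le_sum
              intro j hj
              exact Nat.mul_le_mul (hcb j (Finset.mem_compl.mp hj))
                (Finset.single_le_sum (fun _ _ => Nat.zero_le _) (Finset.mem_univ i))
          _ ≤ ∑ j, (∑ l, a l) * (∑ i', p j i') :=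
              Finset.sum_le_sum_of_subset (Finset.subset_univ _)
      omega
    have hnn : (0 : ℤ) ≤ (b i : ℤ) + ∑ j ∈ Sᶜ, (c j : ℤ) * p j i := by
      positivity
    have hcast : ((b i : ℤ) + ∑ j ∈ Sᶜ, (c j : ℤ) * p j i) ≤ (B : ℤ) := by
      have := hbs
      push_cast
      exact_mod_cast this
    rw [abs_le]
    constructor
    · have : (a i : ℤ) ≥ 0 := Int.ofNat_nonneg _
      linarith
    · have : (a i : ℤ) ≤ B := by exact_mod_cast ha
      linarith
  · intro i
    have h := heq i
    have hz : (a i : ℤ) + n * Δ i = b i + ∑ j, (c j : ℤ) * p j i := by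
      exact_mod_cast h
    have hsplit : ∑ j, (c j : ℤ) * p j i
        = (∑ j ∈ S, (c j : ℤ) * p j i) + ∑ j ∈ Sᶜ, (c j : ℤ) * p j i :=
      (Finset.sum_add_sum_compl S _).symm
    rw [hsplit] at hz
    dsimp only
    linarith
end
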